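/- arXiv:2512.19136 — 12 statements merged into one kernel-verified Lean document; each statement's English description precedes it below -/
import Mathlib

section
/- Let V be a vector space over a field, and let S and T be surjective linear endomorphisms of V with ST = TS. Then the following are equivalent: (i) for all v, w ∈ V with Sv = Tw, there exists u ∈ V with Su = w and Tu = v; (ii) the restriction of S to ker T maps ker T onto ker T. -/
theorem two_snapshot_linear_algebra {F V : Type*} [Field F] [AddCommGroup V] [Module F V]
    (S T : V →ₗ[F] V) (hS : Function.Surjective S) (hT : Function.Surjective T)
    (hc : S ∘ₗ T = T ∘ₗ S) :
    (∀ v w : V, S v = T w → ∃ u : V, S u = w ∧ T u = v) ↔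
      (∀ w ∈ LinearMap.ker T, ∃ u ∈ LinearMap.ker T, S u = w) := by
  constructor
  · intro h w hw
    rw [LinearMap.mem_ker] at hw
    obtain ⟨u, hu1, hu2⟩ := h 0 w (by simp [hw])
    exact ⟨u, LinearMap.mem_ker.mpr hu2, hu1⟩
  · intro h v w hvw
    obtain ⟨u₀, hu₀⟩ := hT v
    have hker : w - S u₀ ∈ LinearMap.ker T := by
      rw [LinearMap.mem_ker, map_sub]
      have : T (S u₀) = S (T u₀) := by
        rw [← LinearMap.comp_apply, ← LinearMap.comp_apply, hc]
      rw [this, hu₀, hvw, sub_self]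
    obtain ⟨z, hz, hSz⟩ := h _ hker
    refine ⟨u₀ + z, ?_, ?_⟩
    · rw [map_add, hSz]; abel
    · rw [map_add, hu₀, LinearMap.mem_ker.mp hz, add_zero]
end

section
/- Let V be a complex vector space, μ : V → V linear, and f : ℤ → V a wave (2·μ(f m) = f (m+1) + f (m−1) for all m). Then for all integers n and k, f (n·k) = U_{n−1}(T_k(μ))(f k) − U_{n−2}(T_k(μ))(f 0), where T_k and U_n are Chebyshev polynomials of the first and second kind extended to negative indices by T_{−k} = T_k and U_{−n−1} = −U_{n−1}. -/
open Polynomial Polynomial.Chebyshev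

private lemma key_smul {V : Type*} [AddCommGroup V] [Module ℂ V]
    (μ : Module.End ℂ V) (p : ℂ[X]) (v : V) :
    Polynomial.aeval μ (2 * X * p) v = (2:ℂ) • μ (Polynomial.aeval μ p v) := by
  simp [map_mul, Module.End.mul_apply, two_smul, map_ofNat]

private lemma stepT {V : Type*} [AddCommGroup V] [Module ℂ V]
    (μ : Module.End ℂ V) (f : ℤ → V)
    (hw : ∀ m : ℤ, (2 : ℂ) • μ (f m) = f (m + 1) + f (m - 1)) :
    ∀ j : ℤ, ∀ m : ℤ,
      (2 : ℂ) • (Polynomial.aeval μ (T ℂ j)) (f m) = f (m + j) + f (m - j) := by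
  have hnat : ∀ j : ℕ, (∀ m : ℤ,
      (2 : ℂ) • (Polynomial.aeval μ (T ℂ j)) (f m) = f (m + j) + f (m - j)) ∧
      (∀ m : ℤ,
      (2 : ℂ) • (Polynomial.aeval μ (T ℂ (j+1))) (f m) = f (m + (j+1)) + f (m - (j+1))) := by
    intro j
    induction j with
    | zero =>
      constructor
      · intro m; simp [T_zero, two_smul]
      · intro m; simpa [T_one] using hw m
    | succ j ih =>
      obtain ⟨ih0, ih1⟩ := ih
      refine ⟨ih1, fun m => ?_⟩
      have hrec : T ℂ ((j:ℤ) + 1 + 1) = 2 * X * T ℂ ((j:ℤ) + 1) - T ℂ j :=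
        T_add_two ℂ (j:ℤ)
      have hcomm : Polynomial.aeval μ (2 * X * T ℂ ((j:ℤ)+1)) (f m)
          = (Polynomial.aeval μ (T ℂ ((j:ℤ)+1))) ((2:ℂ) • μ (f m)) := by
        rw [key_smul]
        have : μ * Polynomial.aeval μ (T ℂ ((j:ℤ)+1))
            = Polynomial.aeval μ (T ℂ ((j:ℤ)+1)) * μ := by
          have hx : μ = Polynomial.aeval μ (X : ℂ[X]) := by simp
          calc μ * Polynomial.aeval μ (T ℂ ((j:ℤ)+1))
              = Polynomial.aeval μ (X * T ℂ ((j:ℤ)+1)) := by rw [map_mul, ← hx]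
            _ = Polynomial.aeval μ (T ℂ ((j:ℤ)+1) * X) := by rw [mul_comm]
            _ = Polynomial.aeval μ (T ℂ ((j:ℤ)+1)) * μ := by rw [map_mul, ← hx]
        calc (2:ℂ) • μ ((Polynomial.aeval μ (T ℂ ((j:ℤ)+1))) (f m))
            = (2:ℂ) • (μ * Polynomial.aeval μ (T ℂ ((j:ℤ)+1))) (f m) := rfl
          _ = (2:ℂ) • (Polynomial.aeval μ (T ℂ ((j:ℤ)+1)) * μ) (f m) := by rw [this]
          _ = (Polynomial.aeval μ (T ℂ ((j:ℤ)+1))) ((2:ℂ) • μ (f m)) := by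
              rw [Module.End.mul_apply, map_smul]
      have e1 : (2:ℂ) • (Polynomial.aeval μ (T ℂ ((j:ℤ)+1+1))) (f m)
          = (2:ℂ) • (Polynomial.aeval μ (T ℂ ((j:ℤ)+1))) (f (m+1))
            + (2:ℂ) • (Polynomial.aeval μ (T ℂ ((j:ℤ)+1))) (f (m-1))
            - (2:ℂ) • (Polynomial.aeval μ (T ℂ (j:ℤ))) (f m) := by
        rw [hrec, map_sub, LinearMap.sub_apply, smul_sub, hcomm, hw m, map_add, smul_add]
      push_cast at e1 ⊢
      rw [e1, ih1 (m+1), ih1 (m-1), ih0 m]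
      have h1 : m + 1 + ((j:ℤ) + 1) = m + ((j:ℤ) + 1 + 1) := by ring
      have h2 : m + 1 - ((j:ℤ) + 1) = m - (j:ℤ) := by ring
      have h3 : m - 1 + ((j:ℤ) + 1) = m + (j:ℤ) := by ring
      have h4 : m - 1 - ((j:ℤ) + 1) = m - ((j:ℤ) + 1 + 1) := by ring
      rw [h1, h2, h3, h4]
      abel
  intro j m
  rcases le_or_gt 0 j with hj | hj
  · obtain ⟨n, rfl⟩ := Int.eq_ofNat_of_zero_le hj
    exact (hnat n).1 m
  · obtain ⟨n, rfl⟩ : ∃ n : ℕ, j = -(n:ℤ) := ⟨j.natAbs, by omega⟩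
    rw [T_neg]
    have := (hnat n).1 m
    rw [this]
    have h1 : m + -(n:ℤ) = m - n := by ring
    have h2 : m - -(n:ℤ) = m + n := by ring
    rw [h1, h2, add_comm]

private lemma waveU {V : Type*} [AddCommGroup V] [Module ℂ V]
    (ν : Module.End ℂ V) (g : ℤ → V)
    (hw : ∀ m : ℤ, (2 : ℂ) • ν (g m) = g (m + 1) + g (m - 1)) :
    ∀ n : ℤ, g n = (Polynomial.aeval ν (U ℂ (n - 1))) (g 1)
      - (Polynomial.aeval ν (U ℂ (n - 2))) (g 0) := by
  have smul2 : ∀ (p : ℂ[X]) (v : V),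
      Polynomial.aeval ν (2 * X * p) v = (2:ℂ) • ν (Polynomial.aeval ν p v) :=
    fun p v => key_smul ν p v
  have main : ∀ n : ℤ,
      (g n = (Polynomial.aeval ν (U ℂ (n - 1))) (g 1)
        - (Polynomial.aeval ν (U ℂ (n - 2))) (g 0)) ∧
      (g (n+1) = (Polynomial.aeval ν (U ℂ n)) (g 1)
        - (Polynomial.aeval ν (U ℂ (n - 1))) (g 0)) := by
    intro n
    induction n using Int.induction_on with
    | zero =>
      constructor
      · simp [U_neg_one, U_neg_two]
      · simp [U_zero, U_neg_one]
    | succ n ih =>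
      obtain ⟨ih0, ih1⟩ := ih
      constructor
      · rw [show ((n:ℤ)+1-1 : ℤ) = (n:ℤ) by ring, show ((n:ℤ)+1-2 : ℤ) = (n:ℤ)-1 by ring]
        exact ih1
      · rw [show ((n:ℤ)+1-1 : ℤ) = (n:ℤ) by ring]
        have h := hw ((n:ℤ)+1)
        rw [show ((n:ℤ)+1-1 : ℤ) = (n:ℤ) by ring] at h
        have hg : g ((n:ℤ)+1+1) = (2:ℂ) • ν (g ((n:ℤ)+1)) - g n := by rw [h]; abel
        have hrec := U_add_two ℂ ((n:ℤ)-1)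
        rw [show ((n:ℤ)-1+2 : ℤ) = (n:ℤ)+1 by ring,
          show ((n:ℤ)-1+1 : ℤ) = (n:ℤ) by ring] at hrec
        have hU2 := U_add_two ℂ ((n:ℤ)-2)
        rw [show ((n:ℤ)-2+2 : ℤ) = (n:ℤ) by ring,
          show ((n:ℤ)-2+1 : ℤ) = (n:ℤ)-1 by ring] at hU2
        have e1 : g ((n:ℤ)+1+1)
            = (Polynomial.aeval ν (2 * X * U ℂ n)) (g 1)
              - (Polynomial.aeval ν (2 * X * U ℂ ((n:ℤ)-1))) (g 0)
              - ((Polynomial.aeval ν (U ℂ ((n:ℤ)-1))) (g 1)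
                - (Polynomial.aeval ν (U ℂ ((n:ℤ)-2))) (g 0)) := by
          rw [hg, ih1, ih0, map_sub ν, smul_sub, ← smul2, ← smul2]
        calc g ((n:ℤ)+1+1)
            = (Polynomial.aeval ν (2 * X * U ℂ n)) (g 1)
              - (Polynomial.aeval ν (2 * X * U ℂ ((n:ℤ)-1))) (g 0)
              - ((Polynomial.aeval ν (U ℂ ((n:ℤ)-1))) (g 1)
                - (Polynomial.aeval ν (U ℂ ((n:ℤ)-2))) (g 0)) := e1
          _ = (Polynomial.aeval ν (2 * X * U ℂ n - U ℂ ((n:ℤ)-1))) (g 1)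
              - (Polynomial.aeval ν (2 * X * U ℂ ((n:ℤ)-1) - U ℂ ((n:ℤ)-2))) (g 0) := by
              simp only [map_sub, LinearMap.sub_apply]; abel
          _ = (Polynomial.aeval ν (U ℂ ((n:ℤ)+1))) (g 1)
              - (Polynomial.aeval ν (U ℂ (n:ℤ))) (g 0) := by rw [← hrec, ← hU2]
    | pred n ih =>
      obtain ⟨ih0, ih1⟩ := ih
      constructor
      · have h := hw (-(n:ℤ))
        have hg : g (-(n:ℤ)-1) = (2:ℂ) • ν (g (-(n:ℤ))) - g (-(n:ℤ)+1) := by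
          rw [h]; abel
        rw [show (-(n:ℤ)-1-1 : ℤ) = -(n:ℤ)-2 by ring,
          show (-(n:ℤ)-1-2 : ℤ) = -(n:ℤ)-3 by ring]
        have ih1' : g (-(n:ℤ)+1)
            = (Polynomial.aeval ν (U ℂ (-(n:ℤ)))) (g 1)
              - (Polynomial.aeval ν (U ℂ (-(n:ℤ)-1))) (g 0) := ih1
        have ih0' : g (-(n:ℤ))
            = (Polynomial.aeval ν (U ℂ (-(n:ℤ)-1))) (g 1)
              - (Polynomial.aeval ν (U ℂ (-(n:ℤ)-2))) (g 0) := ih0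
        have hrec := U_sub_two ℂ (-(n:ℤ)-1)
        rw [show (-(n:ℤ)-1-2 : ℤ) = -(n:ℤ)-3 by ring,
          show (-(n:ℤ)-1-1 : ℤ) = -(n:ℤ)-2 by ring] at hrec
        have hU2 := U_sub_two ℂ (-(n:ℤ))
        have e1 : g (-(n:ℤ)-1)
            = (Polynomial.aeval ν (2 * X * U ℂ (-(n:ℤ)-1))) (g 1)
              - (Polynomial.aeval ν (2 * X * U ℂ (-(n:ℤ)-2))) (g 0)
              - ((Polynomial.aeval ν (U ℂ (-(n:ℤ)))) (g 1)
                - (Polynomial.aeval ν (U ℂ (-(n:ℤ)-1))) (g 0)) := by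
          rw [hg, ih0', ih1', map_sub ν, smul_sub, ← smul2, ← smul2]
        calc g (-(n:ℤ)-1)
            = (Polynomial.aeval ν (2 * X * U ℂ (-(n:ℤ)-1))) (g 1)
              - (Polynomial.aeval ν (2 * X * U ℂ (-(n:ℤ)-2))) (g 0)
              - ((Polynomial.aeval ν (U ℂ (-(n:ℤ)))) (g 1)
                - (Polynomial.aeval ν (U ℂ (-(n:ℤ)-1))) (g 0)) := e1
          _ = (Polynomial.aeval ν (2 * X * U ℂ (-(n:ℤ)-1) - U ℂ (-(n:ℤ)))) (g 1)
              - (Polynomial.aeval ν (2 * X * U ℂ (-(n:ℤ)-2) - U ℂ (-(n:ℤ)-1))) (g 0) := by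
              simp only [map_sub, LinearMap.sub_apply]; abel
          _ = (Polynomial.aeval ν (U ℂ (-(n:ℤ)-2))) (g 1)
              - (Polynomial.aeval ν (U ℂ (-(n:ℤ)-3))) (g 0) := by
              rw [← hU2, ← hrec]
      · rw [show (-(n:ℤ)-1+1 : ℤ) = -(n:ℤ) by ring,
          show (-(n:ℤ)-1-1 : ℤ) = -(n:ℤ)-2 by ring]
        exact ih0
  exact fun n => (main n).1

theorem wave_multiple_snapshot_formula {V : Type*} [AddCommGroup V] [Module ℂ V]
    (μ : Module.End ℂ V) (f : ℤ → V)
    (hw : ∀ m : ℤ, (2 : ℂ) • μ (f m) = f (m + 1) + f (m - 1)) :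
    ∀ n k : ℤ,
      f (n * k) =
        (Polynomial.aeval (Polynomial.aeval μ (Polynomial.Chebyshev.T ℂ k))
            (Polynomial.Chebyshev.U ℂ (n - 1))) (f k)
          - (Polynomial.aeval (Polynomial.aeval μ (Polynomial.Chebyshev.T ℂ k))
              (Polynomial.Chebyshev.U ℂ (n - 2))) (f 0) := by
  intro n k
  have hg : ∀ m : ℤ, (2 : ℂ) • (Polynomial.aeval μ (T ℂ k)) (f (m * k))
      = f ((m + 1) * k) + f ((m - 1) * k) := by
    intro m
    have := stepT μ f hw k (m * k)
    rw [this]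
    congr 1 <;> congr 1 <;> ring
  have := waveU (Polynomial.aeval μ (T ℂ k)) (fun m => f (m * k)) hg n
  simpa using this
end

section
/- Let V be a complex vector space, μ : V → V linear, and f : ℤ → V a wave. Fix integers k, ℓ. Then for all integers r, s: f (r·k + s·ℓ) = T_{s·ℓ}(μ)(f (r·k)) + T_{r·k}(μ)(f (s·ℓ)) − T_{r·k − s·ℓ}(μ)(f 0). -/
open Polynomial Polynomial.Chebyshev

private lemma wave_key_nat {V : Type*} [AddCommGroup V] [Module ℂ V]
    (μ : Module.End ℂ V) (f : ℤ → V)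
    (hw : ∀ m : ℤ, (2 : ℂ) • μ (f m) = f (m + 1) + f (m - 1)) :
    ∀ n : ℕ, ∀ m : ℤ, f (m + n) + f (m - n) =
      (2 : ℂ) • (Polynomial.aeval μ (T ℂ n)) (f m) := by
  intro n
  induction n using Nat.strong_induction_on with
  | _ n ih =>
    match n with
    | 0 => intro m; simp [T_zero, two_smul]
    | 1 => intro m; simpa [T_one] using (hw m).symm
    | (n + 2) =>
      intro m
      have h1 := ih (n + 1) (by omega) m
      have h0 := ih n (by omega) m
      have key : T ℂ ((n : ℤ) + 2) = 2 * X * T ℂ ((n : ℤ) + 1) - T ℂ (n : ℤ) :=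
        T_add_two ℂ n
      have hcast : ((n + 2 : ℕ) : ℤ) = (n : ℤ) + 2 := by push_cast; ring
      have hcast1 : ((n + 1 : ℕ) : ℤ) = (n : ℤ) + 1 := by push_cast; ring
      rw [hcast, key]
      have expand : (Polynomial.aeval μ (2 * X * T ℂ ((n : ℤ) + 1) - T ℂ (n : ℤ))) (f m)
          = (2 : ℂ) • μ ((Polynomial.aeval μ (T ℂ ((n : ℤ) + 1))) (f m))
            - (Polynomial.aeval μ (T ℂ (n : ℤ))) (f m) := by
        simp [mul_assoc, two_smul, Module.End.mul_apply, map_ofNat]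
      rw [expand]
      rw [hcast1] at h1
      -- 2 • μ applied to h1
      have h2 : (2 : ℂ) • μ (f (m + ((n : ℤ) + 1)) + f (m - ((n : ℤ) + 1)))
          = (2 : ℂ) • μ ((2 : ℂ) • (Polynomial.aeval μ (T ℂ ((n : ℤ) + 1))) (f m)) := by
        rw [h1]
      have h3 : (2 : ℂ) • μ (f (m + ((n : ℤ) + 1)) + f (m - ((n : ℤ) + 1)))
          = (f (m + ((n : ℤ) + 2)) + f (m + (n : ℤ)))
            + (f (m - (n : ℤ)) + f (m - ((n : ℤ) + 2))) := by
        rw [map_add, smul_add, hw (m + ((n : ℤ) + 1)), hw (m - ((n : ℤ) + 1))]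
        ring_nf
      have h4 : (2 : ℂ) • μ ((2 : ℂ) • (Polynomial.aeval μ (T ℂ ((n : ℤ) + 1))) (f m))
          = (2 : ℂ) • ((2 : ℂ) • μ ((Polynomial.aeval μ (T ℂ ((n : ℤ) + 1))) (f m))) := by
        rw [map_smul, smul_comm]
      have goal2 : (2 : ℂ) • ((2 : ℂ) • μ ((Polynomial.aeval μ (T ℂ ((n : ℤ) + 1))) (f m)))
          = (f (m + ((n : ℤ) + 2)) + f (m + (n : ℤ)))
            + (f (m - (n : ℤ)) + f (m - ((n : ℤ) + 2))) := by
        rw [← h4, ← h2, h3]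
      rw [smul_sub, goal2, ← h0]
      abel

private lemma wave_key {V : Type*} [AddCommGroup V] [Module ℂ V]
    (μ : Module.End ℂ V) (f : ℤ → V)
    (hw : ∀ m : ℤ, (2 : ℂ) • μ (f m) = f (m + 1) + f (m - 1)) :
    ∀ n m : ℤ, f (m + n) + f (m - n) =
      (2 : ℂ) • (Polynomial.aeval μ (T ℂ n)) (f m) := by
  intro n m
  rcases Int.natAbs_eq n with h | h
  · rw [h]; exact wave_key_nat μ f hw n.natAbs m
  · rw [h, T_neg, show m + -((n.natAbs : ℤ)) = m - n.natAbs by ring,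
      show m - -((n.natAbs : ℤ)) = m + n.natAbs by ring,
      add_comm (f (m - (n.natAbs : ℤ)))]
    exact wave_key_nat μ f hw n.natAbs m

theorem wave_linear_combination_formula {V : Type*} [AddCommGroup V] [Module ℂ V]
    (μ : Module.End ℂ V) (f : ℤ → V)
    (hw : ∀ m : ℤ, (2 : ℂ) • μ (f m) = f (m + 1) + f (m - 1)) (k ℓ : ℤ) :
    ∀ r s : ℤ,
      f (r * k + s * ℓ) =
        (Polynomial.aeval μ (Polynomial.Chebyshev.T ℂ (s * ℓ))) (f (r * k))
          + (Polynomial.aeval μ (Polynomial.Chebyshev.T ℂ (r * k))) (f (s * ℓ))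
          - (Polynomial.aeval μ (Polynomial.Chebyshev.T ℂ (r * k - s * ℓ))) (f 0) := by
  intro r s
  set a := r * k
  set b := s * ℓ
  have h1 := wave_key μ f hw b a
  have h2 := wave_key μ f hw a b
  have h3 := wave_key μ f hw (a - b) 0
  rw [zero_add, zero_sub, neg_sub] at h3
  have h2' : f (a + b) + f (b - a) = (2 : ℂ) • (Polynomial.aeval μ (T ℂ a)) (f b) := by
    rw [← h2]; ring_nf
  apply smul_right_injective V (two_ne_zero (α := ℂ))
  show (2 : ℂ) • f (a + b) = (2 : ℂ) • ((Polynomial.aeval μ (T ℂ b)) (f a)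
    + (Polynomial.aeval μ (T ℂ a)) (f b) - (Polynomial.aeval μ (T ℂ (a - b))) (f 0))
  rw [smul_sub, smul_add, ← h1, ← h2', ← h3]
  module
end

section
/- Let V be a complex vector space, μ : V → V linear, and let f, g : ℤ → V be two waves with f 0 = g 0, f k = g k, and f ℓ = g ℓ, where k and ℓ are positive integers with gcd(k, ℓ) = 1. Then f = g (the two waves agree at all times). -/
/-- Chebyshev-like operator sequence: `chebP μ n` plays the role of `2 T_n(μ)`. -/
noncomputable def chebP {V : Type*} [AddCommGroup V] [Module ℂ V]
    (μ : Module.End ℂ V) : ℕ → Module.End ℂ V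
  | 0 => (2 : ℂ) • (1 : Module.End ℂ V)
  | 1 => (2 : ℂ) • μ
  | (n+2) => (2 : ℂ) • (μ * chebP μ (n+1)) - chebP μ n

/-- For a wave `d`, `d (m+n) + d (m-n) = 2 T_n(μ) (d m)`. -/
lemma cheb_key {V : Type*} [AddCommGroup V] [Module ℂ V] (μ : Module.End ℂ V)
    (d : ℤ → V) (hdw : ∀ m : ℤ, (2 : ℂ) • μ (d m) = d (m + 1) + d (m - 1)) :
    ∀ (n : ℕ) (m : ℤ), d (m + n) + d (m - n) = chebP μ n (d m) := by
  intro n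
  induction n using Nat.twoStepInduction with
  | zero =>
      intro m
      simp [chebP, two_smul]
  | one =>
      intro m
      simpa [chebP] using (hdw m).symm
  | more n ih1 ih2 =>
      intro m
      have A := ih2 m
      have B := ih1 m
      have h1 := hdw (m + ((n : ℤ) + 1))
      have h2 := hdw (m - ((n : ℤ) + 1))
      have e1 : d (m + ((n : ℤ) + 2)) + d (m + (n : ℤ))
          = (2 : ℂ) • μ (d (m + ((n : ℤ) + 1))) := by
        rw [h1]
        congr 2 <;> ring
      have e2 : d (m - (n : ℤ)) + d (m - ((n : ℤ) + 2))
          = (2 : ℂ) • μ (d (m - ((n : ℤ) + 1))) := by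
        rw [h2]
        congr 2 <;> ring
      push_cast at A B ⊢
      simp only [chebP, LinearMap.sub_apply, LinearMap.smul_apply, Module.End.mul_apply]
      rw [← A, ← B, map_add, smul_add, ← e1, ← e2]
      abel

theorem three_snapshot_uniqueness_coprime {V : Type*} [AddCommGroup V] [Module ℂ V]
    (μ : Module.End ℂ V) (f g : ℤ → V)
    (hf : ∀ m : ℤ, (2 : ℂ) • μ (f m) = f (m + 1) + f (m - 1))
    (hg : ∀ m : ℤ, (2 : ℂ) • μ (g m) = g (m + 1) + g (m - 1))
    (k ℓ : ℕ) (hk : 0 < k) (hℓ : 0 < ℓ) (hcop : Nat.gcd k ℓ = 1)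
    (h0 : f 0 = g 0) (hk' : f (k : ℤ) = g (k : ℤ)) (hℓ' : f (ℓ : ℤ) = g (ℓ : ℤ)) :
    f = g := by
  set d : ℤ → V := fun m => f m - g m with hd
  have hdw : ∀ m : ℤ, (2 : ℂ) • μ (d m) = d (m + 1) + d (m - 1) := by
    intro m
    simp only [hd, map_sub, smul_sub, hf m, hg m]
    abel
  have key := cheb_key μ d hdw
  have hd0 : d 0 = 0 := by simp [hd, h0]
  -- oddness
  have hodd : ∀ x : ℤ, d (-x) = - d x := by
    have base : ∀ n : ℕ, d (-(n : ℤ)) = - d (n : ℤ) := by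
      intro n
      have h := key n 0
      rw [hd0, map_zero, zero_add, zero_sub] at h
      exact eq_neg_of_add_eq_zero_right h
    intro x
    rcases Int.natAbs_eq x with h | h
    · rw [h]; exact base x.natAbs
    · rw [h, neg_neg, base x.natAbs, neg_neg]
  -- closure under adding / subtracting a natural with zero value
  have hclose : ∀ (a : ℤ) (n : ℕ), d a = 0 → d (n : ℤ) = 0 →
      d (a + n) = 0 ∧ d (a - n) = 0 := by
    intro a n ha hn
    have e1 : d (a + n) + d (a - n) = 0 := by
      have h := key n a
      rw [ha, map_zero] at h
      exact h
    have e2 : d (a + n) - d (a - n) = 0 := by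
      have h := key a.natAbs (n : ℤ)
      rw [hn, map_zero] at h
      have h' : d ((n : ℤ) + a) + d ((n : ℤ) - a) = 0 := by
        rcases Int.natAbs_eq a with hh | hh
        · rw [← hh] at h; exact h
        · have h1 : (a.natAbs : ℤ) = -a := by omega
          rw [h1] at h
          have : d ((n:ℤ) - a) + d ((n:ℤ) + a) = 0 := by
            convert h using 3 <;> ring
          linear_combination (norm := abel) this
      have hsub : d ((n : ℤ) - a) = - d (a - n) := by
        rw [show (n:ℤ) - a = -(a - n) by ring, hodd]
      rw [hsub, show (n:ℤ) + a = a + n by ring] at h'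
      linear_combination (norm := abel) h'
    have h2 : (2 : ℂ) • d (a + n) = 0 := by
      rw [two_smul]
      linear_combination (norm := abel) e1 + e2
    have hfst : d (a + n) = 0 := by
      rcases smul_eq_zero.mp h2 with h | h
      · norm_num at h
      · exact h
    refine ⟨hfst, ?_⟩
    have := e1
    rw [hfst, zero_add] at this
    exact this
  -- general addition closure
  have hadd : ∀ a b : ℤ, d a = 0 → d b = 0 → d (a + b) = 0 := by
    intro a b ha hb
    rcases Int.natAbs_eq b with h | h
    · rw [h]; exact (hclose a b.natAbs ha (by rw [← h]; exact hb)).1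
    · have hb' : d (b.natAbs : ℤ) = 0 := by
        have : (b.natAbs : ℤ) = -b := by omega
        rw [this, hodd, hb, neg_zero]
      rw [show a + b = a - (b.natAbs : ℤ) by omega]
      exact (hclose a b.natAbs ha hb').2
  -- multiples
  have hmul : ∀ (x : ℤ), d x = 0 → ∀ r : ℤ, d (r * x) = 0 := by
    intro x hx r
    induction r using Int.induction_on with
    | zero => simpa using hd0
    | succ n ih =>
        have := hadd (n * x) x ih hx
        rw [show ((n : ℤ) + 1) * x = n * x + x by ring]
        exact this
    | pred n ih =>
        have hx' : d (-x) = 0 := by rw [hodd, hx, neg_zero]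
        have := hadd (-(n : ℤ) * x) (-x) ih hx'
        rw [show (-(n : ℤ) - 1) * x = -(n:ℤ) * x + -x by ring]
        exact this
  -- snapshots at k and ℓ vanish
  have hdk : d (k : ℤ) = 0 := by simp [hd, hk']
  have hdl : d (ℓ : ℤ) = 0 := by simp [hd, hℓ']
  -- Bezout: d 1 = 0
  have hbez := Nat.gcd_eq_gcd_ab k ℓ
  rw [hcop] at hbez
  have hd1 : d 1 = 0 := by
    rw [show (1 : ℤ) = (k : ℤ) * Nat.gcdA k ℓ + (ℓ : ℤ) * Nat.gcdB k ℓ by exact_mod_cast hbez]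
    exact hadd _ _
      (by rw [mul_comm]; exact hmul _ hdk _)
      (by rw [mul_comm]; exact hmul _ hdl _)
  -- conclude
  funext m
  have : d m = 0 := by
    have := hmul 1 hd1 m
    rwa [mul_one] at this
  have hm : f m - g m = 0 := this
  exact sub_eq_zero.mp hm
end

section
/- For positive integers k and ℓ, the Chebyshev polynomials of the second kind U_{k−1} and U_{ℓ−1} (as polynomials over ℚ, or over ℂ) are coprime if and only if gcd(k, ℓ) = 1. -/
open Polynomial Polynomial.Chebyshev Real

lemma degU : ∀ n : ℕ, (Polynomial.Chebyshev.U ℂ (n : ℤ)).degree = n := by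
  intro n
  induction n using Nat.twoStepInduction with
  | zero => simp [Polynomial.Chebyshev.U_zero]
  | one =>
    rw [show ((1:ℕ):ℤ) = 1 by norm_num, Polynomial.Chebyshev.U_one,
      show ((2:ℂ[X]) * X) = Polynomial.C 2 * X by rw [map_ofNat]]
    simpa using Polynomial.degree_C_mul_X (two_ne_zero (α := ℂ))
  | more n ih1 ih2 =>
    have h : ((n+2:ℕ):ℤ) = (n:ℤ) + 2 := by push_cast; ring
    rw [h, Polynomial.Chebyshev.U_add_two]
    have h2x : ((2:ℂ[X]) * X).degree = 1 := by
      rw [show ((2:ℂ[X]) * X) = Polynomial.C 2 * X by rw [map_ofNat]]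
      simpa using Polynomial.degree_C_mul_X (two_ne_zero (α := ℂ))
    have hm : ((2:ℂ[X]) * X * Polynomial.Chebyshev.U ℂ ((n:ℤ)+1)).degree = ((n+2 : ℕ) : WithBot ℕ) := by
      rw [Polynomial.degree_mul, h2x, show ((n:ℤ)+1) = ((n+1:ℕ):ℤ) by push_cast; ring, ih2]
      push_cast
      ring
    have hlt : (Polynomial.Chebyshev.U ℂ (n:ℤ)).degree <
        ((2:ℂ[X]) * X * Polynomial.Chebyshev.U ℂ ((n:ℤ)+1)).degree := by
      rw [hm, ih1]
      norm_cast
      omega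
    rw [Polynomial.degree_sub_eq_left_of_degree_lt hlt, hm]

lemma U_ne_zero' (n : ℕ) : Polynomial.Chebyshev.U ℂ (n:ℤ) ≠ 0 := by
  intro h
  have := degU n
  rw [h, Polynomial.degree_zero] at this
  exact (by simp : (⊥ : WithBot ℕ) ≠ (n : WithBot ℕ)) this

lemma U_root_cos (k j : ℕ) (hk : 0 < k) (hj0 : 0 < j) (hj : j < k) :
    (Polynomial.Chebyshev.U ℂ ((k:ℤ)-1)).eval (Complex.cos ((j:ℂ) * Real.pi / k)) = 0 := by
  have h := Polynomial.Chebyshev.U_complex_cos ((j:ℂ) * Real.pi / k) ((k:ℤ)-1)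
  have hk' : (k:ℂ) ≠ 0 := Nat.cast_ne_zero.2 hk.ne'
  have harg : (((k:ℤ)-1 : ℤ) + 1 : ℂ) * ((j:ℂ) * Real.pi / k) = (j:ℂ) * Real.pi := by
    push_cast
    field_simp
    ring
  rw [harg] at h
  have hsin0 : Complex.sin ((j:ℂ) * Real.pi) = 0 := by
    have : ((j:ℂ) * Real.pi) = (((j * Real.pi : ℝ)) : ℂ) := by push_cast; ring
    rw [this, ← Complex.ofReal_sin, Real.sin_nat_mul_pi]
    simp
  rw [hsin0] at h
  have hsinne : Complex.sin ((j:ℂ) * Real.pi / k) ≠ 0 := by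
    have h1 : ((j:ℂ) * Real.pi / k) = (((j * Real.pi / k : ℝ)) : ℂ) := by push_cast; ring
    rw [h1, ← Complex.ofReal_sin]
    simp only [ne_eq, Complex.ofReal_eq_zero]
    have hkpos : (0:ℝ) < k := by exact_mod_cast hk
    have hjpos : (0:ℝ) < j := by exact_mod_cast hj0
    have hjk : (j:ℝ) < k := by exact_mod_cast hj
    have hlt : (j:ℝ) * Real.pi / k < Real.pi := by
      rw [div_lt_iff₀ hkpos]
      nlinarith [Real.pi_pos]
    exact (Real.sin_pos_of_pos_of_lt_pi (by positivity) hlt).ne'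
  exact (mul_eq_zero.1 h).resolve_right hsinne

lemma U_root_form (k : ℕ) (hk : 0 < k) {z : ℂ}
    (hz : (Polynomial.Chebyshev.U ℂ ((k:ℤ)-1)).eval z = 0) :
    ∃ j : ℕ, 0 < j ∧ j < k ∧ z = Complex.cos ((j:ℂ) * Real.pi / k) := by
  classical
  set p := Polynomial.Chebyshev.U ℂ ((k:ℤ)-1) with hp
  have hcast : ((k:ℤ)-1) = ((k-1 : ℕ) : ℤ) := by omega
  have hp0 : p ≠ 0 := by rw [hp, hcast]; exact U_ne_zero' (k-1)
  have hdeg : p.natDegree = k - 1 := by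
    have := degU (k-1)
    rw [← hcast] at this
    exact Polynomial.natDegree_eq_of_degree_eq_some this
  set S : Finset ℂ := (Finset.Ioo 0 k).image (fun j : ℕ => Complex.cos ((j:ℂ) * Real.pi / k))
    with hS
  have hinj : Set.InjOn (fun j : ℕ => Complex.cos ((j:ℂ) * Real.pi / k)) (Finset.Ioo 0 k) := by
    intro a ha b hb hab
    simp only [Finset.coe_Ioo, Set.mem_Ioo, Finset.mem_Ioo] at ha hb
    simp only at hab
    have ha' : (a:ℂ) * Real.pi / k = (((a * Real.pi / k : ℝ)) : ℂ) := by push_cast; ring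
    have hb' : (b:ℂ) * Real.pi / k = (((b * Real.pi / k : ℝ)) : ℂ) := by push_cast; ring
    rw [ha', hb', ← Complex.ofReal_cos, ← Complex.ofReal_cos] at hab
    have hab' : Real.cos (a * Real.pi / k) = Real.cos (b * Real.pi / k) :=
      Complex.ofReal_injective hab
    have hmem : ∀ c : ℕ, c < k → (c * Real.pi / k : ℝ) ∈ Set.Icc 0 Real.pi := by
      intro c hc
      constructor
      · positivity
      · rw [div_le_iff₀ (by positivity)]
        have : (c : ℝ) ≤ k := by exact_mod_cast hc.le
        nlinarith [Real.pi_pos]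
    have := Real.injOn_cos (hmem a ha.2) (hmem b hb.2) hab'
    have hkpos : (0:ℝ) < k := by exact_mod_cast hk
    field_simp at this
    norm_cast at this
  have hcard : S.card = k - 1 := by
    rw [hS, Finset.card_image_of_injOn hinj, Nat.card_Ioo]; omega
  have hsub : S ⊆ p.roots.toFinset := by
    intro x hx
    rw [hS, Finset.mem_image] at hx
    obtain ⟨j, hj, rfl⟩ := hx
    rw [Finset.mem_Ioo] at hj
    rw [Multiset.mem_toFinset, Polynomial.mem_roots hp0]
    exact U_root_cos k j hk hj.1 hj.2
  have hcard2 : p.roots.toFinset.card ≤ k - 1 := by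
    calc p.roots.toFinset.card ≤ Multiset.card p.roots := Multiset.toFinset_card_le _
    _ ≤ p.natDegree := p.card_roots'
    _ = k - 1 := hdeg
  have hEq : S = p.roots.toFinset := Finset.eq_of_subset_of_card_le hsub (by omega)
  have hzmem : z ∈ p.roots.toFinset := by
    rw [Multiset.mem_toFinset, Polynomial.mem_roots hp0]
    exact hz
  rw [← hEq, hS, Finset.mem_image] at hzmem
  obtain ⟨j, hj, rfl⟩ := hzmem
  rw [Finset.mem_Ioo] at hj
  exact ⟨j, hj.1, hj.2, rfl⟩

lemma cos_eq_imp (k ℓ j m : ℕ) (hk : 0 < k) (hℓ : 0 < ℓ) (hjk : j < k) (hml : m < ℓ)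
    (h : Complex.cos ((j:ℂ) * Real.pi / k) = Complex.cos ((m:ℂ) * Real.pi / ℓ)) :
    j * ℓ = m * k := by
  have hj' : ((j:ℂ) * Real.pi / k) = (((j * Real.pi / k : ℝ)) : ℂ) := by push_cast; ring
  have hm' : ((m:ℂ) * Real.pi / ℓ) = (((m * Real.pi / ℓ : ℝ)) : ℂ) := by push_cast; ring
  rw [hj', hm', ← Complex.ofReal_cos, ← Complex.ofReal_cos] at h
  have h' : Real.cos (j * Real.pi / k) = Real.cos (m * Real.pi / ℓ) :=
    Complex.ofReal_injective h
  have hmem : ∀ c n : ℕ, 0 < n → c < n → (c * Real.pi / n : ℝ) ∈ Set.Icc 0 Real.pi := by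
    intro c n hn hc
    have hn' : (0:ℝ) < n := by exact_mod_cast hn
    constructor
    · positivity
    · rw [div_le_iff₀ hn']
      have : (c : ℝ) ≤ n := by exact_mod_cast hc.le
      nlinarith [Real.pi_pos]
  have heq := Real.injOn_cos (hmem j k hk hjk) (hmem m ℓ hℓ hml) h'
  have hk' : (0:ℝ) < k := by exact_mod_cast hk
  have hl' : (0:ℝ) < ℓ := by exact_mod_cast hℓ
  field_simp at heq
  have heq' : Real.pi * ((j:ℝ) * ℓ) = Real.pi * ((m:ℝ) * k) := by linear_combination Real.pi * heq
  exact_mod_cast mul_left_cancel₀ Real.pi_ne_zero heq'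

theorem chebyshevU_coprime_iff_gcd_one (k ℓ : ℕ) (hk : 0 < k) (hℓ : 0 < ℓ) :
    IsCoprime (Polynomial.Chebyshev.U ℚ ((k : ℤ) - 1))
        (Polynomial.Chebyshev.U ℚ ((ℓ : ℤ) - 1)) ↔ Nat.gcd k ℓ = 1 := by
  classical
  rw [← Polynomial.isCoprime_map (algebraMap ℚ ℂ), Polynomial.Chebyshev.map_U,
    Polynomial.Chebyshev.map_U]
  constructor
  · intro hco
    by_contra hgcd
    set d := Nat.gcd k ℓ with hd
    have hd0 : 0 < d := Nat.gcd_pos_of_pos_left ℓ hk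
    have hd2 : 2 ≤ d := by omega
    have hdk : d ∣ k := Nat.gcd_dvd_left k ℓ
    have hdl : d ∣ ℓ := Nat.gcd_dvd_right k ℓ
    set z : ℂ := Complex.cos ((1:ℂ) * Real.pi / d) with hz
    have hroot : ∀ n : ℕ, 0 < n → d ∣ n → (Polynomial.Chebyshev.U ℂ ((n:ℤ)-1)).eval z = 0 := by
      intro n hn hdn
      have hj0 : 0 < n / d := Nat.div_pos (Nat.le_of_dvd hn hdn) hd0
      have hjn : n / d < n := Nat.div_lt_self hn hd2
      have harg : ((n / d : ℕ) : ℂ) * Real.pi / n = (1:ℂ) * Real.pi / d := by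
        have hnd : ((n / d : ℕ) : ℂ) = (n : ℂ) / d := by
          rw [Nat.cast_div hdn (by exact_mod_cast hd0.ne')]
        rw [hnd]
        have hn' : (n:ℂ) ≠ 0 := Nat.cast_ne_zero.2 hn.ne'
        have hd' : (d:ℂ) ≠ 0 := Nat.cast_ne_zero.2 hd0.ne'
        field_simp
      have := U_root_cos n (n/d) hn hj0 hjn
      rw [harg] at this
      exact this
    obtain ⟨a, b, hab⟩ := hco
    have := congrArg (Polynomial.eval z) hab
    simp only [Polynomial.eval_add, Polynomial.eval_mul, Polynomial.eval_one,
      hroot k hk hdk, hroot ℓ hℓ hdl, mul_zero, add_zero, zero_add] at this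
    exact zero_ne_one this
  · intro hgcd
    by_contra hnc
    set g := EuclideanDomain.gcd (Polynomial.Chebyshev.U ℂ ((k:ℤ)-1))
      (Polynomial.Chebyshev.U ℂ ((ℓ:ℤ)-1)) with hg
    have hUk0 : Polynomial.Chebyshev.U ℂ ((k:ℤ)-1) ≠ 0 := by
      rw [show ((k:ℤ)-1) = ((k-1:ℕ):ℤ) by omega]; exact U_ne_zero' (k-1)
    have hgu : ¬IsUnit g := fun h => hnc (EuclideanDomain.gcd_isUnit_iff.1 h)
    have hg0 : g ≠ 0 := by
      intro h
      rw [hg, EuclideanDomain.gcd_eq_zero_iff] at h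
      exact hUk0 h.1
    obtain ⟨z, hzroot⟩ := Complex.exists_root
      (Polynomial.degree_pos_of_ne_zero_of_nonunit hg0 hgu)
    have hzk : (Polynomial.Chebyshev.U ℂ ((k:ℤ)-1)).eval z = 0 := by
      obtain ⟨c, hc⟩ := EuclideanDomain.gcd_dvd_left (Polynomial.Chebyshev.U ℂ ((k:ℤ)-1))
        (Polynomial.Chebyshev.U ℂ ((ℓ:ℤ)-1))
      rw [hc, Polynomial.eval_mul, ← hg, hzroot, zero_mul]
    have hzl : (Polynomial.Chebyshev.U ℂ ((ℓ:ℤ)-1)).eval z = 0 := by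
      obtain ⟨c, hc⟩ := EuclideanDomain.gcd_dvd_right (Polynomial.Chebyshev.U ℂ ((k:ℤ)-1))
        (Polynomial.Chebyshev.U ℂ ((ℓ:ℤ)-1))
      rw [hc, Polynomial.eval_mul, ← hg, hzroot, zero_mul]
    obtain ⟨j, hj0, hjk, hjz⟩ := U_root_form k hk hzk
    obtain ⟨m, hm0, hml, hmz⟩ := U_root_form ℓ hℓ hzl
    have heq : j * ℓ = m * k := cos_eq_imp k ℓ j m hk hℓ hjk hml (hjz ▸ hmz ▸ rfl)
    have hco : Nat.Coprime k ℓ := hgcd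
    have hkj : k ∣ j := hco.dvd_of_dvd_mul_right ⟨m, by rw [heq]; ring⟩
    exact absurd (Nat.le_of_dvd hj0 hkj) (by omega)
end

section
/- Let V be a complex vector space and μ : V → V linear such that P(μ) is surjective for every nonzero polynomial P. Fix positive integers k < ℓ with gcd(k,ℓ) = 1, and let f, g, h ∈ V satisfy the compatibility condition U_{ℓ−1}(μ)(g + U_{k−2}(μ)f) = U_{k−1}(μ)(h + U_{ℓ−2}(μ)f). Then there exists a wave w : ℤ → V with w 0 = f, w k = g, and w ℓ = h. -/
open Polynomial Polynomial.Chebyshev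

private lemma myU_eval_one (n : ℕ) : (U ℂ (n : ℤ)).eval (1 : ℂ) = (n : ℂ) + 1 := by
  induction n using Nat.twoStepInduction with
  | zero => simp
  | one => simp [U_one]; norm_num
  | more n ih1 ih2 =>
    push_cast at ih1 ih2 ⊢
    rw [U_add_two]
    simp only [eval_sub, eval_mul, eval_X, eval_ofNat, ih1, ih2]
    ring

private lemma myU_eval_neg_one (n : ℕ) :
    (U ℂ (n : ℤ)).eval (-1 : ℂ) = (-1 : ℂ) ^ n * ((n : ℂ) + 1) := by
  induction n using Nat.twoStepInduction with
  | zero => simp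
  | one => simp [U_one]; norm_num
  | more n ih1 ih2 =>
    push_cast at ih1 ih2 ⊢
    rw [U_add_two]
    simp only [eval_sub, eval_mul, eval_X, eval_ofNat, ih1, ih2]
    ring

private lemma myU_cos_int_pi_ne_zero (k : ℕ) (hk : 0 < k) (t : ℤ) :
    (U ℂ ((k : ℤ) - 1)).eval (Complex.cos ((t : ℂ) * (Real.pi : ℂ))) ≠ 0 := by
  have hidx : ((k : ℤ) - 1) = ((k - 1 : ℕ) : ℤ) := by omega
  have hcast : ((k - 1 : ℕ) : ℂ) + 1 = (k : ℂ) := by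
    have : (k - 1) + 1 = k := Nat.succ_pred_eq_of_pos hk
    calc ((k - 1 : ℕ) : ℂ) + 1 = (((k - 1) + 1 : ℕ) : ℂ) := by push_cast; ring
      _ = (k : ℂ) := by rw [this]
  have hkne : (k : ℂ) ≠ 0 := Nat.cast_ne_zero.mpr hk.ne'
  rw [hidx]
  rcases Int.even_or_odd t with ⟨s, hs⟩ | ⟨s, hs⟩
  · have hc : Complex.cos ((t : ℂ) * (Real.pi : ℂ)) = 1 := by
      rw [hs]
      have e : ((s + s : ℤ) : ℂ) * (Real.pi : ℂ) = (s : ℂ) * (2 * (Real.pi : ℂ)) := by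
        push_cast; ring
      rw [e]
      exact Complex.cos_int_mul_two_pi s
    rw [hc, myU_eval_one, hcast]
    exact hkne
  · have hc : Complex.cos ((t : ℂ) * (Real.pi : ℂ)) = -1 := by
      rw [hs]
      have e : ((2 * s + 1 : ℤ) : ℂ) * (Real.pi : ℂ)
          = (s : ℂ) * (2 * (Real.pi : ℂ)) + (Real.pi : ℂ) := by push_cast; ring
      rw [e, Complex.cos_add_pi, Complex.cos_int_mul_two_pi]
    rw [hc, myU_eval_neg_one, hcast]
    exact mul_ne_zero (pow_ne_zero _ (by norm_num)) hkne

private lemma myU_coprime (k ℓ : ℕ) (hk : 0 < k) (hl : 0 < ℓ) (hcop : Nat.gcd k ℓ = 1) :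
    IsCoprime (U ℂ ((k : ℤ) - 1)) (U ℂ ((ℓ : ℤ) - 1)) := by
  rw [Polynomial.isCoprime_iff_aeval_ne_zero_of_isAlgClosed (k := ℂ) (K := ℂ) (U ℂ ((k : ℤ) - 1)) (U ℂ ((ℓ : ℤ) - 1))]
  intro a
  by_contra hcon
  push_neg at hcon
  obtain ⟨h1, h2⟩ := hcon
  simp only [Polynomial.coe_aeval_eq_eval] at h1 h2
  obtain ⟨θ, rfl⟩ := Complex.cos_surjective a
  have hsk : Complex.sin ((k : ℂ) * θ) = 0 := by
    have hu := U_complex_cos θ ((k : ℤ) - 1)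
    rw [h1, zero_mul] at hu
    have hc : ((((k : ℤ) - 1 : ℤ)) : ℂ) + 1 = (k : ℂ) := by push_cast; ring
    rw [hc] at hu
    exact hu.symm
  have hsl : Complex.sin ((ℓ : ℂ) * θ) = 0 := by
    have hu := U_complex_cos θ ((ℓ : ℤ) - 1)
    rw [h2, zero_mul] at hu
    have hc : ((((ℓ : ℤ) - 1 : ℤ)) : ℂ) + 1 = (ℓ : ℂ) := by push_cast; ring
    rw [hc] at hu
    exact hu.symm
  obtain ⟨m, hm⟩ := Complex.sin_eq_zero_iff.mp hsk
  obtain ⟨m', hm'⟩ := Complex.sin_eq_zero_iff.mp hsl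
  have hpi : ((Real.pi : ℂ)) ≠ 0 := Complex.ofReal_ne_zero.mpr Real.pi_ne_zero
  have keyC : ((k : ℤ) * m' : ℂ) = ((ℓ : ℤ) * m : ℂ) := by
    have hh : ((k : ℤ) * m' : ℂ) * (Real.pi : ℂ) = ((ℓ : ℤ) * m : ℂ) * (Real.pi : ℂ) := by
      push_cast
      calc (k : ℂ) * (m' : ℂ) * (Real.pi : ℂ) = (k : ℂ) * ((m' : ℂ) * (Real.pi : ℂ)) := by ring
        _ = (k : ℂ) * ((ℓ : ℂ) * θ) := by rw [← hm']
        _ = (ℓ : ℂ) * ((k : ℂ) * θ) := by ring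
        _ = (ℓ : ℂ) * ((m : ℂ) * (Real.pi : ℂ)) := by rw [hm]
        _ = (ℓ : ℂ) * (m : ℂ) * (Real.pi : ℂ) := by ring
    exact mul_right_cancel₀ hpi hh
  have key : (k : ℤ) * m' = (ℓ : ℤ) * m := by exact_mod_cast keyC
  have hco : IsCoprime (k : ℤ) (ℓ : ℤ) := by
    rw [Int.isCoprime_iff_gcd_eq_one]
    simpa using hcop
  have hkd : (k : ℤ) ∣ m := hco.dvd_of_dvd_mul_left ⟨m', by linarith⟩
  obtain ⟨t, ht⟩ := hkd
  have hθ : θ = (t : ℂ) * (Real.pi : ℂ) := by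
    have hk0 : (k : ℂ) ≠ 0 := Nat.cast_ne_zero.mpr hk.ne'
    apply mul_left_cancel₀ hk0
    rw [hm, ht]
    push_cast
    ring
  rw [hθ] at h1
  exact myU_cos_int_pi_ne_zero k hk t h1


theorem three_snapshot_existence_coprime {V : Type*} [AddCommGroup V] [Module ℂ V]
    (μ : Module.End ℂ V)
    (hsurj : ∀ P : Polynomial ℂ, P ≠ 0 → Function.Surjective ⇑(Polynomial.aeval μ P))
    (k ℓ : ℕ) (hk : 0 < k) (hkl : k < ℓ) (hcop : Nat.gcd k ℓ = 1) (f g h : V)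
    (hcompat :
      (Polynomial.aeval μ (Polynomial.Chebyshev.U ℂ ((ℓ : ℤ) - 1)))
          (g + (Polynomial.aeval μ (Polynomial.Chebyshev.U ℂ ((k : ℤ) - 2))) f) =
        (Polynomial.aeval μ (Polynomial.Chebyshev.U ℂ ((k : ℤ) - 1)))
          (h + (Polynomial.aeval μ (Polynomial.Chebyshev.U ℂ ((ℓ : ℤ) - 2))) f)) :
    ∃ w : ℤ → V,
      (∀ m : ℤ, (2 : ℂ) • μ (w m) = w (m + 1) + w (m - 1)) ∧
        w 0 = f ∧ w (k : ℤ) = g ∧ w (ℓ : ℤ) = h := by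
  classical
  have hl : 0 < ℓ := hk.trans hkl
  obtain ⟨a, b, hab⟩ := myU_coprime k ℓ hk hl hcop
  set g' : V := g + (Polynomial.aeval μ (U ℂ ((k : ℤ) - 2))) f with hg'
  set h' : V := h + (Polynomial.aeval μ (U ℂ ((ℓ : ℤ) - 2))) f with hh'
  clear_value g' h'
  have comp : ∀ (p q : ℂ[X]) (x : V),
      Polynomial.aeval μ p (Polynomial.aeval μ q x) = Polynomial.aeval μ (p * q) x := by
    intro p q x
    rw [map_mul, Module.End.mul_apply]
  set v : V := Polynomial.aeval μ a g' + Polynomial.aeval μ b h' with hv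
  clear_value v
  have hAv : Polynomial.aeval μ (U ℂ ((k : ℤ) - 1)) v = g' := by
    have c1 : Polynomial.aeval μ (U ℂ ((k : ℤ) - 1)) (Polynomial.aeval μ a g')
        = Polynomial.aeval μ a (Polynomial.aeval μ (U ℂ ((k : ℤ) - 1)) g') := by
      rw [comp, comp, mul_comm]
    have c2 : Polynomial.aeval μ (U ℂ ((k : ℤ) - 1)) (Polynomial.aeval μ b h')
        = Polynomial.aeval μ b (Polynomial.aeval μ (U ℂ ((ℓ : ℤ) - 1)) g') := by
      rw [comp, mul_comm (U ℂ ((k : ℤ) - 1)) b, ← comp, ← hcompat]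
    calc Polynomial.aeval μ (U ℂ ((k : ℤ) - 1)) v
        = Polynomial.aeval μ a (Polynomial.aeval μ (U ℂ ((k : ℤ) - 1)) g')
            + Polynomial.aeval μ b (Polynomial.aeval μ (U ℂ ((ℓ : ℤ) - 1)) g') := by
          rw [hv, map_add, c1, c2]
      _ = Polynomial.aeval μ (a * U ℂ ((k : ℤ) - 1) + b * U ℂ ((ℓ : ℤ) - 1)) g' := by
          rw [comp, comp, map_add, LinearMap.add_apply]
      _ = g' := by rw [hab, map_one, Module.End.one_apply]
  have hBv : Polynomial.aeval μ (U ℂ ((ℓ : ℤ) - 1)) v = h' := by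
    have c1 : Polynomial.aeval μ (U ℂ ((ℓ : ℤ) - 1)) (Polynomial.aeval μ a g')
        = Polynomial.aeval μ a (Polynomial.aeval μ (U ℂ ((k : ℤ) - 1)) h') := by
      rw [comp, mul_comm (U ℂ ((ℓ : ℤ) - 1)) a, ← comp, hcompat]
    have c2 : Polynomial.aeval μ (U ℂ ((ℓ : ℤ) - 1)) (Polynomial.aeval μ b h')
        = Polynomial.aeval μ b (Polynomial.aeval μ (U ℂ ((ℓ : ℤ) - 1)) h') := by
      rw [comp, comp, mul_comm]
    calc Polynomial.aeval μ (U ℂ ((ℓ : ℤ) - 1)) v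
        = Polynomial.aeval μ a (Polynomial.aeval μ (U ℂ ((k : ℤ) - 1)) h')
            + Polynomial.aeval μ b (Polynomial.aeval μ (U ℂ ((ℓ : ℤ) - 1)) h') := by
          rw [hv, map_add, c1, c2]
      _ = Polynomial.aeval μ (a * U ℂ ((k : ℤ) - 1) + b * U ℂ ((ℓ : ℤ) - 1)) h' := by
          rw [comp, comp, map_add, LinearMap.add_apply]
      _ = h' := by rw [hab, map_one, Module.End.one_apply]
  have key2 : ∀ (p : ℂ[X]) (x : V),
      Polynomial.aeval μ (2 * X * p) x = (2 : ℂ) • μ (Polynomial.aeval μ p x) := by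
    intro p x
    have e : (2 * X * p : ℂ[X]) = Polynomial.C (2 : ℂ) * (X * p) := by
      rw [map_ofNat]; ring
    rw [e, map_mul, Polynomial.aeval_C, map_mul, Polynomial.aeval_X,
      Module.End.mul_apply, Module.End.mul_apply, Module.algebraMap_end_apply]
  refine ⟨fun m => Polynomial.aeval μ (U ℂ (m - 1)) v - Polynomial.aeval μ (U ℂ (m - 2)) f,
    ?_, ?_, ?_, ?_⟩
  · intro m
    have hP : U ℂ (m + 1 - 1) + U ℂ (m - 1 - 1) = 2 * X * U ℂ (m - 1) := by
      have hrec := U_add_one ℂ (m - 1)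
      rw [show m - 1 + 1 = m + 1 - 1 from by ring] at hrec
      rw [hrec]; ring
    have hQ : U ℂ (m + 1 - 2) + U ℂ (m - 1 - 2) = 2 * X * U ℂ (m - 2) := by
      have hrec := U_add_one ℂ (m - 2)
      rw [show m - 2 + 1 = m + 1 - 2 from by ring,
        show m - 2 - 1 = m - 1 - 2 from by ring] at hrec
      rw [hrec]; ring
    calc (2 : ℂ) • μ (Polynomial.aeval μ (U ℂ (m - 1)) v - Polynomial.aeval μ (U ℂ (m - 2)) f)
        = (2 : ℂ) • μ (Polynomial.aeval μ (U ℂ (m - 1)) v)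
            - (2 : ℂ) • μ (Polynomial.aeval μ (U ℂ (m - 2)) f) := by
          rw [map_sub, smul_sub]
      _ = Polynomial.aeval μ (2 * X * U ℂ (m - 1)) v
            - Polynomial.aeval μ (2 * X * U ℂ (m - 2)) f := by rw [key2, key2]
      _ = Polynomial.aeval μ (U ℂ (m + 1 - 1) + U ℂ (m - 1 - 1)) v
            - Polynomial.aeval μ (U ℂ (m + 1 - 2) + U ℂ (m - 1 - 2)) f := by rw [hP, hQ]
      _ = (Polynomial.aeval μ (U ℂ (m + 1 - 1)) v - Polynomial.aeval μ (U ℂ (m + 1 - 2)) f)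
            + (Polynomial.aeval μ (U ℂ (m - 1 - 1)) v
              - Polynomial.aeval μ (U ℂ (m - 1 - 2)) f) := by
          rw [map_add, map_add, LinearMap.add_apply, LinearMap.add_apply]
          abel
  · show Polynomial.aeval μ (U ℂ ((0 : ℤ) - 1)) v - Polynomial.aeval μ (U ℂ ((0 : ℤ) - 2)) f = f
    rw [show (0 : ℤ) - 1 = -1 from by ring, show (0 : ℤ) - 2 = -2 from by ring,
      U_neg_one, U_neg_two, map_zero, map_neg, map_one]
    simp
  · show Polynomial.aeval μ (U ℂ ((k : ℤ) - 1)) v - Polynomial.aeval μ (U ℂ ((k : ℤ) - 2)) f = g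
    rw [hAv, hg']
    abel
  · show Polynomial.aeval μ (U ℂ ((ℓ : ℤ) - 1)) v - Polynomial.aeval μ (U ℂ ((ℓ : ℤ) - 2)) f = h
    rw [hBv, hh']
    abel
end

section
/- Let V be a complex vector space, μ : V → V linear, k, ℓ positive integers with k < ℓ, and suppose w : ℤ → V is a wave with w 0 = f, w k = g, w ℓ = h. Then the compatibility condition holds: U_{ℓ−1}(μ)(g + U_{k−2}(μ)f) = U_{k−1}(μ)(h + U_{ℓ−2}(μ)f). -/
open Polynomial Polynomial.Chebyshev

lemma aux_two_mul_X {V : Type*} [AddCommGroup V] [Module ℂ V]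
    (μ : Module.End ℂ V) (p : ℂ[X]) (v : V) :
    (aeval μ (2 * X * p)) v = (2 : ℂ) • μ ((aeval μ p) v) := by
  simp [map_mul, aeval_X, two_smul, two_mul, Module.End.mul_apply]

lemma wave_closed {V : Type*} [AddCommGroup V] [Module ℂ V]
    (μ : Module.End ℂ V) (w : ℤ → V)
    (hw : ∀ m : ℤ, (2 : ℂ) • μ (w m) = w (m + 1) + w (m - 1)) (m : ℤ) :
    w m = (aeval μ (U ℂ (m - 1))) (w 1) - (aeval μ (U ℂ (m - 2))) (w 0) := by
  suffices H : ∀ n : ℤ,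
      (w n = (aeval μ (U ℂ (n - 1))) (w 1) - (aeval μ (U ℂ (n - 2))) (w 0)) ∧
      (w (n + 1) = (aeval μ (U ℂ n)) (w 1) - (aeval μ (U ℂ (n - 1))) (w 0)) by
    have := (H m).1
    simpa using this
  intro n
  induction n using Int.induction_on with
  | zero =>
    constructor
    · simp [show (0:ℤ) - 1 = -1 by ring, show (0:ℤ) - 2 = -2 by ring,
        U_neg_one, U_neg_two]
    · simp [show (0:ℤ) - 1 = -1 by ring, U_neg_one, U_zero]
  | succ n ih =>
    obtain ⟨h1, h2⟩ := ih
    refine ⟨by rw [show ((n:ℤ) + 1 - 1) = n by ring, show ((n:ℤ) + 1 - 2) = n - 1 by ring]; exact h2, ?_⟩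
    have hrec := hw (n + 1)
    rw [show ((n:ℤ) + 1 - 1) = n by ring] at hrec
    have hw2 : w (n + 1 + 1) = (2 : ℂ) • μ (w (n + 1)) - w n := eq_sub_of_add_eq hrec.symm
    rw [hw2, h2, h1]
    rw [map_sub, smul_sub, ← aux_two_mul_X, ← aux_two_mul_X]
    have e1 : 2 * X * U ℂ (n:ℤ) = U ℂ (n + 1) + U ℂ (n - 1) := by
      have := U_add_two ℂ ((n : ℤ) - 1)
      rw [show (n:ℤ) - 1 + 2 = n + 1 by ring, show (n:ℤ) - 1 + 1 = n by ring] at this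
      rw [this]; ring
    have e2 : 2 * X * U ℂ ((n:ℤ) - 1) = U ℂ n + U ℂ (n - 2) := by
      have := U_add_two ℂ ((n : ℤ) - 2)
      rw [show (n:ℤ) - 2 + 2 = n by ring, show (n:ℤ) - 2 + 1 = n - 1 by ring] at this
      rw [this]; ring
    rw [show ((n:ℤ) + 1 - 1) = n by ring, e1, e2]
    simp only [map_add, LinearMap.add_apply]
    abel
  | pred n ih =>
    obtain ⟨h1, h2⟩ := ih
    refine ⟨?_, by rw [show (-(n:ℤ) - 1 + 1) = -n by ring, show (-(n:ℤ) - 1) = -n - 1 by ring, show (-(n:ℤ) - 1 - 1) = -n - 2 by ring]; exact h1⟩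
    have hrec := hw (-(n : ℤ))
    rw [show (-(n:ℤ) - 1) = -n - 1 by ring] at hrec
    have hw2 : w (-(n:ℤ) - 1) = (2 : ℂ) • μ (w (-n)) - w (-n + 1) := eq_sub_of_add_eq' hrec.symm
    rw [hw2, h1, h2]
    rw [map_sub, smul_sub, ← aux_two_mul_X, ← aux_two_mul_X]
    have e1 : 2 * X * U ℂ (-(n:ℤ) - 1) = U ℂ (-n) + U ℂ (-n - 2) := by
      have := U_add_two ℂ (-(n : ℤ) - 2)
      rw [show -(n:ℤ) - 2 + 2 = -n by ring, show -(n:ℤ) - 2 + 1 = -n - 1 by ring] at this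
      rw [this]; ring
    have e2 : 2 * X * U ℂ (-(n:ℤ) - 2) = U ℂ (-n - 1) + U ℂ (-n - 3) := by
      have := U_add_two ℂ (-(n : ℤ) - 3)
      rw [show -(n:ℤ) - 3 + 2 = -n - 1 by ring, show -(n:ℤ) - 3 + 1 = -n - 2 by ring] at this
      rw [this]; ring
    rw [show -(n:ℤ) - 1 - 1 = -n - 2 by ring, show -(n:ℤ) - 1 - 2 = -n - 3 by ring, e1, e2]
    simp only [map_add, LinearMap.add_apply]
    abel

theorem three_snapshot_compatibility_necessary {V : Type*} [AddCommGroup V] [Module ℂ V]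
    (μ : Module.End ℂ V) (k ℓ : ℕ) (hk : 0 < k) (hkl : k < ℓ)
    (w : ℤ → V) (hw : ∀ m : ℤ, (2 : ℂ) • μ (w m) = w (m + 1) + w (m - 1))
    (f g h : V) (h0 : w 0 = f) (hk' : w (k : ℤ) = g) (hℓ' : w (ℓ : ℤ) = h) :
    (Polynomial.aeval μ (Polynomial.Chebyshev.U ℂ ((ℓ : ℤ) - 1)))
        (g + (Polynomial.aeval μ (Polynomial.Chebyshev.U ℂ ((k : ℤ) - 2))) f) =
      (Polynomial.aeval μ (Polynomial.Chebyshev.U ℂ ((k : ℤ) - 1)))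
        (h + (Polynomial.aeval μ (Polynomial.Chebyshev.U ℂ ((ℓ : ℤ) - 2))) f) := by
  have hg := wave_closed μ w hw (k : ℤ)
  rw [hk', h0] at hg
  have hh := wave_closed μ w hw (ℓ : ℤ)
  rw [hℓ', h0] at hh
  rw [hg, hh, sub_add_cancel, sub_add_cancel]
  rw [← Module.End.mul_apply, ← map_mul, mul_comm, map_mul, Module.End.mul_apply]
end

section
/- Let s, t be positive real numbers with s + t = 1, let V be a complex vector space, μ : V → V linear, and let f : ℕ → V satisfy the generalized Euler–Poisson–Darboux equation μ(f k) = s·f (k+1) + t·f (k−1) for all k ≥ 1. Then for all k ≥ 0, f k = (√(t/s))^k · [ √(s/t) · U_{k−1}((1/(2√(st)))·μ)(f 1) − U_{k−2}((1/(2√(st)))·μ)(f 0) ], where U_n are Chebyshev polynomials of the second kind extended by U_{−n−1} = −U_{n−1}. -/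
open Polynomial Polynomial.Chebyshev
theorem generalized_EPD_closed_form {V : Type*} [AddCommGroup V] [Module ℂ V]
    (μ : Module.End ℂ V) (s t : ℝ) (hs : 0 < s) (ht : 0 < t) (hst : s + t = 1)
    (f : ℕ → V)
    (hEPD : ∀ k : ℕ, 1 ≤ k → μ (f k) = (s : ℂ) • f (k + 1) + (t : ℂ) • f (k - 1)) :
    ∀ k : ℕ,
      f k = ((Real.sqrt (t / s) : ℂ)) ^ k •
        ((Real.sqrt (s / t) : ℂ) •
            (Polynomial.aeval (((1 / (2 * Real.sqrt (s * t)) : ℝ) : ℂ) • μ)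
              (Polynomial.Chebyshev.U ℂ ((k : ℤ) - 1))) (f 1)
          - (Polynomial.aeval (((1 / (2 * Real.sqrt (s * t)) : ℝ) : ℂ) • μ)
              (Polynomial.Chebyshev.U ℂ ((k : ℤ) - 2))) (f 0)) := by
  have hst' : (0:ℝ) < s * t := mul_pos hs ht
  have hr : (0:ℝ) < Real.sqrt (s * t) := Real.sqrt_pos.mpr hst'
  set A : ℂ := (Real.sqrt (t / s) : ℂ) with hA
  set B : ℂ := (Real.sqrt (s / t) : ℂ) with hB
  set C : ℂ := ((1 / (2 * Real.sqrt (s * t)) : ℝ) : ℂ) with hC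
  set r : ℂ := (Real.sqrt (s * t) : ℂ) with hrr
  set Q : ℤ → Module.End ℂ V := fun n => Polynomial.aeval (C • μ) (U ℂ n) with hQ
  -- scalar facts
  have hAB : A * B = 1 := by
    rw [hA, hB, ← Complex.ofReal_mul, ← Real.sqrt_mul (by positivity),
      show t / s * (s / t) = 1 by field_simp, Real.sqrt_one, Complex.ofReal_one]
  have hAr : A * r = (t : ℂ) := by
    rw [hA, hrr, ← Complex.ofReal_mul, ← Real.sqrt_mul (by positivity),
      show t / s * (s * t) = t ^ 2 by field_simp, Real.sqrt_sq ht.le]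
  have hA2 : A ^ 2 = (t : ℂ) / (s : ℂ) := by
    rw [hA, ← Complex.ofReal_pow, Real.sq_sqrt (by positivity), Complex.ofReal_div]
  have h2Cr : 2 * C * r = 1 := by
    rw [hC, hrr, ← Complex.ofReal_ofNat, ← Complex.ofReal_mul, ← Complex.ofReal_mul,
      show 2 * (1 / (2 * Real.sqrt (s * t))) * Real.sqrt (s * t) = 1 by field_simp]
    exact Complex.ofReal_one
  -- key operator identity
  have key : ∀ (n : ℤ) (v : V), μ (Q (n + 1) v) = r • (Q (n + 2) v + Q n v) := by
    intro n v
    have h : Q (n + 2) = (2 * C) • (μ * Q (n + 1)) - Q n := by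
      rw [hQ]; simp only
      rw [U_add_two, map_sub, map_mul, map_mul, Polynomial.aeval_X, map_ofNat]
      congr 1
      rw [mul_assoc, two_mul, smul_mul_assoc, ← two_smul ℂ, smul_smul]
    have h' : Q (n + 2) v = (2 * C) • μ ((Q (n + 1)) v) - Q n v := by
      rw [h]; simp [LinearMap.sub_apply, LinearMap.smul_apply, Module.End.mul_apply]
    rw [h', sub_add_cancel, smul_smul, show r * (2 * C) = 1 by rw [← h2Cr]; ring,
      one_smul]
  intro k
  induction k using Nat.twoStepInduction with
  | zero =>
    simp [Q, U_neg_one, U_neg_two, show ((0:ℕ):ℤ) - 1 = -1 by norm_num,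
      show ((0:ℕ):ℤ) - 2 = -2 by norm_num]
  | one =>
    rw [show ((1:ℕ):ℤ) - 1 = 0 by norm_num, show ((1:ℕ):ℤ) - 2 = -1 by norm_num]
    simp only [U_zero, U_neg_one, map_one, map_zero, Module.End.one_apply,
      LinearMap.zero_apply, sub_zero, pow_one, smul_smul, hAB, one_smul]
  | more k ih ih1 =>
    have hrec := hEPD (k + 1) (by omega)
    have hk2 : f (k + 2) = (s : ℂ)⁻¹ • (μ (f (k + 1)) - (t : ℂ) • f k) := by
      rw [hrec, show k + 1 + 1 = k + 2 from rfl, show k + 1 - 1 = k from rfl,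
        add_sub_cancel_right, smul_smul, inv_mul_cancel₀ (by exact_mod_cast hs.ne'),
        one_smul]
    rw [hk2, ih1, ih]
    have e1 : ((k + 1 : ℕ) : ℤ) - 1 = (k : ℤ) - 1 + 1 := by push_cast; ring
    have e2 : ((k + 1 : ℕ) : ℤ) - 2 = (k : ℤ) - 2 + 1 := by push_cast; ring
    have e3 : ((k + 2 : ℕ) : ℤ) - 1 = (k : ℤ) + 1 := by push_cast; ring
    have e4 : ((k + 2 : ℕ) : ℤ) - 2 = (k : ℤ) := by push_cast; ring
    rw [e1, e2, e3, e4]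
    rw [map_smul, map_sub, map_smul, key ((k:ℤ)-1) (f 1), key ((k:ℤ)-2) (f 0)]
    rw [show (k:ℤ) - 1 + 2 = (k:ℤ) + 1 by ring, show (k:ℤ) - 2 + 2 = (k:ℤ) by ring]
    have hsne : (s : ℂ) ≠ 0 := by exact_mod_cast hs.ne'
    have hA2' : A ^ 2 * (s : ℂ) = (t : ℂ) := by
      rw [hA2]; field_simp
    match_scalars
    · field_simp
      linear_combination (A ^ k * B) * hAr - (A ^ k * B) * hA2'
    · exact mul_eq_zero_of_right _ (by linear_combination (A ^ k * B) * hAr)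
    · field_simp
      linear_combination (-(A ^ k)) * hAr + (A ^ k) * hA2'
    · exact mul_eq_zero_of_right _ (by linear_combination (- (A ^ k)) * hAr)
end

section
/- For positive integers k and ℓ, the greatest common divisor of the Chebyshev polynomials of the second kind U_{k−1} and U_{ℓ−1} (over ℚ) is, up to a unit, U_{d−1} where d = gcd(k, ℓ). -/
open Polynomial Polynomial.Chebyshev

/-- Addition formula for Chebyshev U. -/
lemma chebU_add_formula (j : ℕ) : ∀ n : ℤ,
    U ℚ ((j : ℤ) - 1 + n) = U ℚ ((j : ℤ) - 1) * U ℚ n - U ℚ ((j : ℤ) - 2) * U ℚ (n - 1) := by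
  induction j using Nat.twoStepInduction with
  | zero =>
    intro n
    rw [show ((0:ℕ):ℤ) - 1 + n = n - 1 by push_cast; ring]
    simp [U_neg_one, U_neg_two]
  | one =>
    intro n
    rw [show ((1:ℕ):ℤ) - 1 + n = n by push_cast; ring]
    simp [U_neg_one]
  | more j ih0 ih1 =>
    intro n
    have i0 := ih0 n
    have i1 := ih1 n
    push_cast at i0 i1 ⊢
    linear_combination (norm := ring_nf)
      U_add_two ℚ ((j:ℤ) - 1 + n) + 2 * X * i1 - i0
      - U ℚ n * U_add_two ℚ ((j:ℤ) - 1) + U ℚ (n - 1) * U_add_two ℚ ((j:ℤ) - 2)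


/-- Consecutive Chebyshev U polynomials are coprime. -/
lemma chebU_coprime (n : ℕ) : IsCoprime (U ℚ ((n:ℤ) - 1)) (U ℚ (n:ℤ)) := by
  induction n with
  | zero => simpa [U_neg_one] using (isCoprime_one_right (x := (0 : ℚ[X])))
  | succ n ih =>
    have h : U ℚ ((n:ℤ) + 1) = -U ℚ ((n:ℤ) - 1) + U ℚ (n:ℤ) * (2 * X) := by
      linear_combination (norm := ring_nf) U_add_one ℚ (n:ℤ)
    push_cast
    rw [add_sub_cancel_right, h]
    exact (ih.symm.neg_right).add_mul_left_right (2 * X)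

/-- Euclid-like step for gcd of Chebyshev U. -/
lemma chebU_gcd_step (m n : ℕ) :
    Associated
      (EuclideanDomain.gcd (U ℚ ((m:ℤ) + n - 1)) (U ℚ ((n:ℤ) - 1)))
      (EuclideanDomain.gcd (U ℚ ((m:ℤ) - 1)) (U ℚ ((n:ℤ) - 1))) := by
  have key : U ℚ ((m:ℤ) + n - 1) =
      U ℚ ((m:ℤ) - 1) * U ℚ (n:ℤ) - U ℚ ((m:ℤ) - 2) * U ℚ ((n:ℤ) - 1) := by
    have := chebU_add_formula m (n:ℤ)
    rwa [show (m:ℤ) - 1 + n = (m:ℤ) + n - 1 by ring] at this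
  apply associated_of_dvd_dvd
  · have h1 := EuclideanDomain.gcd_dvd_left (U ℚ ((m:ℤ) + n - 1)) (U ℚ ((n:ℤ) - 1))
    have h2 := EuclideanDomain.gcd_dvd_right (U ℚ ((m:ℤ) + n - 1)) (U ℚ ((n:ℤ) - 1))
    have h3 : EuclideanDomain.gcd (U ℚ ((m:ℤ) + n - 1)) (U ℚ ((n:ℤ) - 1)) ∣
        U ℚ ((m:ℤ) - 1) * U ℚ (n:ℤ) := by
      have : U ℚ ((m:ℤ) - 1) * U ℚ (n:ℤ) =
          U ℚ ((m:ℤ) + n - 1) + U ℚ ((m:ℤ) - 2) * U ℚ ((n:ℤ) - 1) := by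
        linear_combination -key
      rw [this]
      exact dvd_add h1 (Dvd.dvd.mul_left h2 _)
    have hc : IsCoprime (EuclideanDomain.gcd (U ℚ ((m:ℤ) + n - 1)) (U ℚ ((n:ℤ) - 1)))
        (U ℚ (n:ℤ)) :=
      (chebU_coprime n).of_isCoprime_of_dvd_left h2
    exact EuclideanDomain.dvd_gcd (hc.dvd_of_dvd_mul_right h3) h2
  · have h1 := EuclideanDomain.gcd_dvd_left (U ℚ ((m:ℤ) - 1)) (U ℚ ((n:ℤ) - 1))
    have h2 := EuclideanDomain.gcd_dvd_right (U ℚ ((m:ℤ) - 1)) (U ℚ ((n:ℤ) - 1))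
    refine EuclideanDomain.dvd_gcd ?_ h2
    rw [key]
    exact dvd_sub (Dvd.dvd.mul_right h1 _) (Dvd.dvd.mul_left h2 _)

lemma chebU_gcd_iter (q m n : ℕ) :
    Associated
      (EuclideanDomain.gcd (U ℚ ((m:ℤ) + q * n - 1)) (U ℚ ((n:ℤ) - 1)))
      (EuclideanDomain.gcd (U ℚ ((m:ℤ) - 1)) (U ℚ ((n:ℤ) - 1))) := by
  induction q with
  | zero =>
    rw [show ((0:ℕ):ℤ) * n = 0 by push_cast; ring, add_zero]
  | succ q ih =>
    have step := chebU_gcd_step (m + q * n) n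
    push_cast at step
    rw [show (m:ℤ) + q * n + n - 1 = (m:ℤ) + (q + 1) * n - 1 by ring] at step
    exact step.trans ih

lemma chebU_gcd_comm (a b : ℚ[X]) :
    Associated (EuclideanDomain.gcd a b) (EuclideanDomain.gcd b a) :=
  associated_of_dvd_dvd
    (EuclideanDomain.dvd_gcd (EuclideanDomain.gcd_dvd_right _ _) (EuclideanDomain.gcd_dvd_left _ _))
    (EuclideanDomain.dvd_gcd (EuclideanDomain.gcd_dvd_right _ _) (EuclideanDomain.gcd_dvd_left _ _))

lemma chebU_gcd_aux : ∀ k ℓ : ℕ,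
    Associated
      (EuclideanDomain.gcd (U ℚ ((k : ℤ) - 1)) (U ℚ ((ℓ : ℤ) - 1)))
      (U ℚ ((Nat.gcd k ℓ : ℤ) - 1)) := by
  intro k ℓ
  induction k, ℓ using Nat.gcd.induction with
  | H0 n =>
    simp only [Nat.cast_zero, zero_sub, U_neg_one, Nat.gcd_zero_left,
      EuclideanDomain.gcd_zero_left]
    exact Associated.refl _
  | H1 m n hm ih =>
    rw [Nat.gcd_rec m n]
    have hmod : ((n % m : ℕ) : ℤ) + (n / m : ℕ) * (m : ℕ) - 1 = (n : ℤ) - 1 := by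
      rw [show ((n % m : ℕ) : ℤ) + (n / m : ℕ) * (m : ℕ) - 1
            = ((n % m + n / m * m : ℕ) : ℤ) - 1 by push_cast; ring,
        Nat.mod_add_div']
    have iter := chebU_gcd_iter (n / m) (n % m) m
    rw [hmod] at iter
    exact (chebU_gcd_comm _ _).trans (iter.trans ih)

theorem chebyshevU_gcd (k ℓ : ℕ) (hk : 0 < k) (hℓ : 0 < ℓ) :
    Associated
      (EuclideanDomain.gcd (Polynomial.Chebyshev.U ℚ ((k : ℤ) - 1))
        (Polynomial.Chebyshev.U ℚ ((ℓ : ℤ) - 1)))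
      (Polynomial.Chebyshev.U ℚ ((Nat.gcd k ℓ : ℤ) - 1)) :=
  chebU_gcd_aux k ℓ
end

section
/- Let V be a complex vector space, μ : V → V linear with the property that P(μ) is surjective on V for every nonzero polynomial P. Fix integers 2 ≤ k < ℓ, let d = gcd(k,ℓ), and let W, Vp ∈ ℚ[x] be polynomials with U_{k−1} = U_{d−1}·W and U_{ℓ−1} = U_{d−1}·Vp. Suppose f, g, h ∈ V satisfy Vp(μ)(g + U_{k−2}(μ)f) = W(μ)(h + U_{ℓ−2}(μ)f). Then there exists a wave w : ℤ → V with w 0 = f, w k = g, w ℓ = h. -/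
open Polynomial Polynomial.Chebyshev

lemma chebU_add (R : Type*) [CommRing R] (a b : ℤ) :
    U R (a + b) = U R a * U R b - U R (a-1) * U R (b-1) := by
  induction b using Polynomial.Chebyshev.induct with
  | zero => simp
  | one =>
    have h := U_add_one R a
    rw [show (1:ℤ) - 1 = 0 by norm_num, U_zero, U_one, mul_one]
    linear_combination h
  | add_two n ih1 ih2 =>
    have h₁ := U_add_two R (a + n)
    have h₂ := U_add_two R n
    have h₃ := U_add_one R n
    linear_combination (norm := ring_nf) h₁ + (2*(X:R[X]))*ih1 - ih2 - U R a * h₂ +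
      U R (a-1) * h₃
  | neg_add_one n ih1 ih2 =>
    have h₁ := U_sub_one R (a - n)
    have h₂ := U_sub_one R (-n)
    have h₃ := U_sub_one R (-n - 1)
    linear_combination (norm := ring_nf) h₁ + (2*(X:R[X]))*ih1 - ih2 - U R a * h₂ +
      U R (a-1) * h₃

lemma chebU_eval_one (n : ℕ) : (U ℂ (n:ℤ)).eval 1 = (n:ℂ) + 1 := by
  induction n using Nat.twoStepInduction with
  | zero => simp
  | one => norm_num [U_one]
  | more n ih1 ih2 =>
    have h := U_add_two ℂ (n : ℤ)
    have h2 := congrArg (Polynomial.eval (1:ℂ)) h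
    simp only [eval_sub, eval_mul, eval_ofNat, eval_X] at h2
    have e2 : ((n + 2 : ℕ) : ℤ) = (n:ℤ) + 2 := by push_cast; ring
    have e1 : ((n + 1 : ℕ) : ℤ) = (n:ℤ) + 1 := by push_cast; ring
    rw [e2, h2, ← e1, ih1, ih2]
    push_cast
    ring

lemma chebU_ne_zero (n : ℕ) : U ℂ (n:ℤ) ≠ 0 := by
  intro h
  have h2 := congrArg (Polynomial.eval (1:ℂ)) h
  rw [chebU_eval_one] at h2
  simp at h2
  exact Nat.cast_add_one_ne_zero n h2

lemma chebU_coprime_succ (n : ℕ) : IsCoprime (U ℂ (n:ℤ)) (U ℂ ((n:ℤ) - 1)) := by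
  induction n with
  | zero => simpa [U_neg_one] using (isCoprime_one_left : IsCoprime (1:Polynomial ℂ) 0)
  | succ n ih =>
    have h := ((ih.symm).neg_left).add_mul_right_left (2 * X)
    have e : -U ℂ ((n:ℤ) - 1) + 2 * X * U ℂ (n:ℤ) = U ℂ ((n:ℤ) + 1) := by
      linear_combination -(U_add_one ℂ (n:ℤ))
    rw [e] at h
    have en : ((n+1:ℕ):ℤ) = (n:ℤ) + 1 := by push_cast; ring
    rw [en, add_sub_cancel_right]
    exact h

lemma chebU_mod (k : ℕ) (q : ℕ) (b : ℤ) :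
    ∃ C : Polynomial ℂ, U ℂ ((q:ℤ) * (k:ℤ) + b) =
      (U ℂ (k:ℤ))^q * U ℂ b + C * U ℂ ((k:ℤ) - 1) := by
  induction q generalizing b with
  | zero => exact ⟨0, by simp⟩
  | succ q ih =>
    obtain ⟨C, hC⟩ := ih b
    refine ⟨U ℂ (k:ℤ) * C - U ℂ ((q:ℤ)*(k:ℤ) + b - 1), ?_⟩
    have h1 := chebU_add ℂ (k:ℤ) ((q:ℤ)*(k:ℤ) + b)
    have e : ((q+1:ℕ):ℤ) * (k:ℤ) + b = (k:ℤ) + ((q:ℤ)*(k:ℤ) + b) := by push_cast; ring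
    rw [e, h1, hC]
    ring

lemma chebU_bezout : ∀ k : ℕ, ∀ ℓ : ℕ, ∃ A B : Polynomial ℂ,
    A * U ℂ ((k:ℤ)-1) + B * U ℂ ((ℓ:ℤ)-1) = U ℂ ((Nat.gcd k ℓ : ℤ) - 1) := by
  intro k
  induction k using Nat.strong_induction_on with
  | _ k IH =>
    intro ℓ
    rcases Nat.eq_zero_or_pos k with hk0 | hk0
    · subst hk0
      exact ⟨0, 1, by simp⟩
    · obtain ⟨A', B', hIH⟩ := IH (ℓ % k) (Nat.mod_lt ℓ hk0) k
      obtain ⟨C, hC⟩ := chebU_mod k (ℓ / k) (((ℓ % k : ℕ):ℤ) - 1)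
      have hix : ((ℓ / k : ℕ):ℤ) * (k:ℤ) + (((ℓ % k : ℕ):ℤ) - 1) = (ℓ:ℤ) - 1 := by
        have h0 : (k:ℤ) * ((ℓ / k : ℕ):ℤ) + ((ℓ % k : ℕ):ℤ) = (ℓ:ℤ) := by
          exact_mod_cast Nat.div_add_mod ℓ k
        linarith
      rw [hix] at hC
      have hcp : IsCoprime ((U ℂ (k:ℤ))^(ℓ/k)) (U ℂ ((k:ℤ)-1)) :=
        (chebU_coprime_succ k).pow_left
      obtain ⟨u, v, huv⟩ := hcp
      refine ⟨B' + A' * (v * U ℂ (((ℓ % k : ℕ):ℤ) - 1)) - A' * u * C, A' * u, ?_⟩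
      rw [Nat.gcd_rec k ℓ] at *
      linear_combination hIH + A' * U ℂ (((ℓ % k : ℕ):ℤ) - 1) * huv + A' * u * hC

section Main
variable {V : Type*} [AddCommGroup V] [Module ℂ V]

lemma aeval_mul_apply (μ : Module.End ℂ V) (p q : Polynomial ℂ) (v : V) :
    Polynomial.aeval μ (p * q) v = Polynomial.aeval μ p (Polynomial.aeval μ q v) := by
  rw [map_mul]; rfl

lemma cheb_wave_key (μ : Module.End ℂ V) (n : ℤ) (v : V) :
    (2 : ℂ) • μ (Polynomial.aeval μ (U ℂ n) v) =
      Polynomial.aeval μ (U ℂ (n+1)) v + Polynomial.aeval μ (U ℂ (n-1)) v := by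
  have h : U ℂ (n+1) + U ℂ (n-1) = (2:ℂ) • (X * U ℂ n) := by
    rw [Polynomial.smul_eq_C_mul, map_ofNat]
    linear_combination U_add_one ℂ n
  have h2 : Polynomial.aeval μ (U ℂ (n+1)) v + Polynomial.aeval μ (U ℂ (n-1)) v
      = (2:ℂ) • (Polynomial.aeval μ (X * U ℂ n) v) := by
    rw [← LinearMap.add_apply, ← map_add, h, map_smul, LinearMap.smul_apply]
  rw [h2, aeval_mul_apply, Polynomial.aeval_X]

end Main

theorem three_snapshot_existence_general {V : Type*} [AddCommGroup V] [Module ℂ V]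
    (μ : Module.End ℂ V)
    (hsurj : ∀ P : Polynomial ℂ, P ≠ 0 → Function.Surjective ⇑(Polynomial.aeval μ P))
    (k ℓ : ℕ) (hk : 2 ≤ k) (hkl : k < ℓ) (d : ℕ) (hd : d = Nat.gcd k ℓ)
    (W Vp : Polynomial ℂ)
    (hW : Polynomial.Chebyshev.U ℂ ((k : ℤ) - 1) =
      Polynomial.Chebyshev.U ℂ ((d : ℤ) - 1) * W)
    (hVp : Polynomial.Chebyshev.U ℂ ((ℓ : ℤ) - 1) =
      Polynomial.Chebyshev.U ℂ ((d : ℤ) - 1) * Vp)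
    (f g h : V)
    (hcompat :
      (Polynomial.aeval μ Vp)
          (g + (Polynomial.aeval μ (Polynomial.Chebyshev.U ℂ ((k : ℤ) - 2))) f) =
        (Polynomial.aeval μ W)
          (h + (Polynomial.aeval μ (Polynomial.Chebyshev.U ℂ ((ℓ : ℤ) - 2))) f)) :
    ∃ w : ℤ → V,
      (∀ m : ℤ, (2 : ℂ) • μ (w m) = w (m + 1) + w (m - 1)) ∧
        w 0 = f ∧ w (k : ℤ) = g ∧ w (ℓ : ℤ) = h := by
  -- nonzeroness
  have hd1 : 1 ≤ d := by
    rw [hd]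
    exact Nat.gcd_pos_of_pos_left ℓ (by omega)
  have hUd : U ℂ ((d:ℤ) - 1) ≠ 0 := by
    have : ((d:ℤ) - 1) = ((d - 1 : ℕ) : ℤ) := by push_cast [Nat.cast_sub hd1]; ring
    rw [this]; exact chebU_ne_zero _
  have hUk : U ℂ ((k:ℤ) - 1) ≠ 0 := by
    have : ((k:ℤ) - 1) = ((k - 1 : ℕ) : ℤ) := by push_cast [Nat.cast_sub (by omega : 1 ≤ k)]; ring
    rw [this]; exact chebU_ne_zero _
  have hWne : W ≠ 0 := by
    intro h0
    rw [h0, mul_zero] at hW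
    exact hUk hW
  have hVne : Vp ≠ 0 := by
    intro h0
    rw [h0, mul_zero] at hVp
    apply chebU_ne_zero (ℓ - 1)
    rw [show (((ℓ - 1:ℕ)):ℤ) = (ℓ:ℤ) - 1 by push_cast [Nat.cast_sub (by omega : 1 ≤ ℓ)]; ring]
    exact hVp
  -- Bezout
  obtain ⟨A, B, hAB⟩ := chebU_bezout k ℓ
  rw [← hd] at hAB
  have hABWV : A * W + B * Vp = 1 := by
    apply mul_left_cancel₀ hUd
    rw [hW, hVp] at hAB
    linear_combination hAB
  -- setup
  set G := g + (Polynomial.aeval μ (U ℂ ((k : ℤ) - 2))) f with hG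
  set H := h + (Polynomial.aeval μ (U ℂ ((ℓ : ℤ) - 2))) f with hH
  obtain ⟨s, hs⟩ := hsurj (U ℂ ((d:ℤ)-1) * W * Vp)
    (mul_ne_zero (mul_ne_zero hUd hWne) hVne) ((Polynomial.aeval μ Vp) G)
  set e₁ := Polynomial.aeval μ (U ℂ ((k:ℤ)-1)) s - G with he₁
  set e₂ := Polynomial.aeval μ (U ℂ ((ℓ:ℤ)-1)) s - H with he₂
  have hVpe₁ : Polynomial.aeval μ Vp e₁ = 0 := by
    rw [he₁, map_sub, ← aeval_mul_apply,
      show Vp * U ℂ ((k:ℤ)-1) = U ℂ ((d:ℤ)-1) * W * Vp by rw [hW]; ring, hs, sub_self]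
  have hWe₂ : Polynomial.aeval μ W e₂ = 0 := by
    rw [he₂, map_sub, ← aeval_mul_apply,
      show W * U ℂ ((ℓ:ℤ)-1) = U ℂ ((d:ℤ)-1) * W * Vp by rw [hVp]; ring, hs, hcompat, sub_self]
  obtain ⟨t₁, ht₁⟩ := hsurj (U ℂ ((d:ℤ)-1)) hUd e₁
  obtain ⟨t₂, ht₂⟩ := hsurj (U ℂ ((d:ℤ)-1)) hUd e₂
  set a := s - Polynomial.aeval μ A t₁ - Polynomial.aeval μ B t₂ with ha
  have hka : Polynomial.aeval μ (U ℂ ((k:ℤ)-1)) a = G := by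
    have hA1 : Polynomial.aeval μ (U ℂ ((k:ℤ)-1)) (Polynomial.aeval μ A t₁)
        = Polynomial.aeval μ (W * A) e₁ := by
      rw [← aeval_mul_apply, show U ℂ ((k:ℤ)-1) * A = W * A * U ℂ ((d:ℤ)-1) by rw [hW]; ring,
        aeval_mul_apply, ht₁]
    have hB1 : Polynomial.aeval μ (U ℂ ((k:ℤ)-1)) (Polynomial.aeval μ B t₂)
        = Polynomial.aeval μ (W * B) e₂ := by
      rw [← aeval_mul_apply, show U ℂ ((k:ℤ)-1) * B = W * B * U ℂ ((d:ℤ)-1) by rw [hW]; ring,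
        aeval_mul_apply, ht₂]
    have hB0 : Polynomial.aeval μ (W * B) e₂ = 0 := by
      rw [show W * B = B * W by ring, aeval_mul_apply, hWe₂, map_zero]
    have hA2 : Polynomial.aeval μ (W * A) e₁ = e₁ := by
      have h4 : Polynomial.aeval μ (B * Vp) e₁ = 0 := by
        rw [aeval_mul_apply, hVpe₁, map_zero]
      have h3 : Polynomial.aeval μ (W * A) e₁ + Polynomial.aeval μ (B * Vp) e₁
          = Polynomial.aeval μ (1 : Polynomial ℂ) e₁ := by
        rw [← LinearMap.add_apply, ← map_add,
          show W * A + B * Vp = A * W + B * Vp by ring, hABWV]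
      rw [h4, add_zero, map_one] at h3
      simpa using h3
    have h1 : Polynomial.aeval μ (U ℂ ((k:ℤ)-1)) s = G + e₁ := by rw [he₁]; abel
    rw [ha, map_sub, map_sub, hA1, hB1, hB0, sub_zero, h1, hA2]; abel
  have hla : Polynomial.aeval μ (U ℂ ((ℓ:ℤ)-1)) a = H := by
    have hA1 : Polynomial.aeval μ (U ℂ ((ℓ:ℤ)-1)) (Polynomial.aeval μ A t₁)
        = Polynomial.aeval μ (Vp * A) e₁ := by
      rw [← aeval_mul_apply, show U ℂ ((ℓ:ℤ)-1) * A = Vp * A * U ℂ ((d:ℤ)-1) by rw [hVp]; ring,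
        aeval_mul_apply, ht₁]
    have hB1 : Polynomial.aeval μ (U ℂ ((ℓ:ℤ)-1)) (Polynomial.aeval μ B t₂)
        = Polynomial.aeval μ (Vp * B) e₂ := by
      rw [← aeval_mul_apply, show U ℂ ((ℓ:ℤ)-1) * B = Vp * B * U ℂ ((d:ℤ)-1) by rw [hVp]; ring,
        aeval_mul_apply, ht₂]
    have hA0 : Polynomial.aeval μ (Vp * A) e₁ = 0 := by
      rw [show Vp * A = A * Vp by ring, aeval_mul_apply, hVpe₁, map_zero]
    have hB2 : Polynomial.aeval μ (Vp * B) e₂ = e₂ := by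
      have h4 : Polynomial.aeval μ (A * W) e₂ = 0 := by
        rw [aeval_mul_apply, hWe₂, map_zero]
      have h3 : Polynomial.aeval μ (Vp * B) e₂ + Polynomial.aeval μ (A * W) e₂
          = Polynomial.aeval μ (1 : Polynomial ℂ) e₂ := by
        rw [← LinearMap.add_apply, ← map_add,
          show Vp * B + A * W = A * W + B * Vp by ring, hABWV]
      rw [h4, add_zero, map_one] at h3
      simpa using h3
    have h1 : Polynomial.aeval μ (U ℂ ((ℓ:ℤ)-1)) s = H + e₂ := by rw [he₂]; abel
    rw [ha, map_sub, map_sub, hA1, hB1, hA0, sub_zero, h1, hB2]; abel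
  -- the wave
  refine ⟨fun m => Polynomial.aeval μ (U ℂ (m-1)) a - Polynomial.aeval μ (U ℂ (m-2)) f,
    ?_, ?_, ?_, ?_⟩
  · intro m
    have k1 := cheb_wave_key μ (m-1) a
    have k2 := cheb_wave_key μ (m-2) f
    simp only [map_sub, smul_sub]
    rw [k1, k2]
    rw [show m - 1 + 1 = m + 1 - 1 from by ring, show m - 1 - 1 = m - 1 - 1 from rfl,
      show m - 2 + 1 = m + 1 - 2 from by ring, show m - 2 - 1 = m - 1 - 2 from by ring]
    abel
  · norm_num [U_neg_one, U_neg_two]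
  · show Polynomial.aeval μ (U ℂ ((k:ℤ)-1)) a - Polynomial.aeval μ (U ℂ ((k:ℤ)-2)) f = g
    rw [hka, hG]; abel
  · show Polynomial.aeval μ (U ℂ ((ℓ:ℤ)-1)) a - Polynomial.aeval μ (U ℂ ((ℓ:ℤ)-2)) f = h
    rw [hla, hH]; abel
end

section
/- Let V be a vector space over a field F, let μ : V → V be linear such that P(μ) is surjective for every nonzero P ∈ F[x], and let S, T ∈ F[x] be coprime nonzero polynomials. Then for any g, h ∈ V with T(μ)g = S(μ)h, there exists f ∈ V with S(μ)f = g and T(μ)f = h. -/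
theorem coprime_poly_simultaneous_solution {F V : Type*} [Field F] [AddCommGroup V]
    [Module F V] (μ : Module.End F V)
    (hsurj : ∀ P : Polynomial F, P ≠ 0 → Function.Surjective ⇑(Polynomial.aeval μ P))
    (S T : Polynomial F) (hS : S ≠ 0) (hT : T ≠ 0) (hcop : IsCoprime S T) :
    ∀ g h : V, (Polynomial.aeval μ T) g = (Polynomial.aeval μ S) h →
      ∃ f : V, (Polynomial.aeval μ S) f = g ∧ (Polynomial.aeval μ T) f = h := by
  obtain ⟨Q, R, hQR⟩ := hcop
  intro g h hgh
  have key : ∀ (A B : Polynomial F) (v : V),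
      (Polynomial.aeval μ A) ((Polynomial.aeval μ B) v) = (Polynomial.aeval μ (A * B)) v := by
    intro A B v
    rw [map_mul, Module.End.mul_apply]
  refine ⟨(Polynomial.aeval μ Q) g + (Polynomial.aeval μ R) h, ?_, ?_⟩
  · rw [map_add, key S Q, key S R, mul_comm S R, ← key R S, ← hgh, key R T, mul_comm S Q,
      ← LinearMap.add_apply, ← map_add, hQR]
    simp
  · rw [map_add, key T Q, key T R, mul_comm T Q, ← key Q T, hgh, key Q S, mul_comm T R, ← LinearMap.add_apply, ← map_add, hQR]
    simp
end

section
/- Let V be a complex vector space, μ : V → V linear, k ≥ 1 an integer, and let w, w' : ℤ → V be waves with w 0 = w' 0 and w k = w' k. Then w (n·k) = w' (n·k) for every integer n. -/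
open Polynomial Polynomial.Chebyshev

theorem my_U_add (R : Type*) [CommRing R] (m k : ℤ) :
    2 * T R k * U R m = U R (m + k) + U R (m - k) := by
  induction k using Polynomial.Chebyshev.induct with
  | zero => simp [two_mul]
  | one => rw [U_add_one, U_sub_one, T_one]; ring
  | add_two k ih1 ih2 =>
    have h₁ := U_add_two R (m + k)
    have h₂ := U_sub_two R (m - k)
    have h₃ := T_add_two R k
    linear_combination (norm := ring_nf) 2 * U R m * h₃ - h₂ - h₁ - ih2 + 2 * (X : R[X]) * ih1
  | neg_add_one k ih1 ih2 =>
    have h₁ := U_add_two R (m + (-k - 1))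
    have h₂ := U_sub_two R (m - (-k - 1))
    have h₃ := T_add_two R (-k - 1)
    linear_combination (norm := ring_nf) 2 * U R m * h₃ - h₂ - h₁ - ih2 + 2 * (X : R[X]) * ih1

theorem my_U_dvd (R : Type*) [CommRing R] (k : ℤ) :
    ∀ n : ℤ, U R (k - 1) ∣ U R (n * k - 1) := by
  intro n
  induction n using Polynomial.Chebyshev.induct with
  | zero => simp
  | one => simp
  | add_two n ih1 ih2 =>
    have h := my_U_add R ((n + 1) * k - 1) k
    have e1 : (n + 1) * k - 1 + k = (n + 2) * k - 1 := by ring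
    have e2 : (n + 1) * k - 1 - k = n * k - 1 := by ring
    rw [e1, e2] at h
    have : U R ((n + 2) * k - 1) = 2 * T R k * U R ((n + 1) * k - 1) - U R (n * k - 1) := by
      linear_combination -h
    rw [this]
    exact dvd_sub (ih1.mul_left _) ih2
  | neg_add_one n ih1 ih2 =>
    have h := my_U_add R ((-n) * k - 1) k
    have e1 : (-n) * k - 1 + k = (-n + 1) * k - 1 := by ring
    have e2 : (-n) * k - 1 - k = (-n - 1) * k - 1 := by ring
    rw [e1, e2] at h
    have : U R ((-n - 1) * k - 1)
        = 2 * T R k * U R ((-n) * k - 1) - U R ((-n + 1) * k - 1) := by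
      linear_combination -h
    rw [this]
    exact dvd_sub (ih1.mul_left _) ih2

theorem two_snapshot_uniqueness_multiples {V : Type*} [AddCommGroup V] [Module ℂ V]
    (μ : Module.End ℂ V) (k : ℕ) (hk : 1 ≤ k) (w w' : ℤ → V)
    (hw : ∀ m : ℤ, (2 : ℂ) • μ (w m) = w (m + 1) + w (m - 1))
    (hw' : ∀ m : ℤ, (2 : ℂ) • μ (w' m) = w' (m + 1) + w' (m - 1))
    (h0 : w 0 = w' 0) (hk' : w (k : ℤ) = w' (k : ℤ)) :
    ∀ n : ℤ, w (n * k) = w' (n * k) := by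
  set d : ℤ → V := fun m => w m - w' m with hdd
  have hd : ∀ m : ℤ, (2 : ℂ) • μ (d m) = d (m + 1) + d (m - 1) := by
    intro m
    simp only [hdd, map_sub, smul_sub, hw m, hw' m]
    abel
  have hd0 : d 0 = 0 := by simp [hdd, h0]
  have hdk : d (k : ℤ) = 0 := by simp [hdd, hk']
  have haux : ∀ (p : ℂ[X]) (v : V),
      (Polynomial.aeval μ (2 * X * p)) v = (2 : ℂ) • μ ((Polynomial.aeval μ p) v) := by
    intro p v
    rw [map_mul, map_mul, aeval_X, map_ofNat]
    simp [Module.End.mul_apply, Module.End.ofNat_apply, two_smul]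
  have haux2 : ∀ (p q : ℂ[X]) (v : V),
      (Polynomial.aeval μ (2 * X * p - q)) v
        = (2 : ℂ) • μ ((Polynomial.aeval μ p) v) - (Polynomial.aeval μ q) v := by
    intro p q v
    rw [map_sub, LinearMap.sub_apply, haux]
  have key : ∀ m : ℤ, d m = (Polynomial.aeval μ (U ℂ (m - 1))) (d 1) := by
    intro m
    induction m using Polynomial.Chebyshev.induct with
    | zero => simpa using hd0
    | one => simp
    | add_two n ih1 ih2 =>
      have h := hd ((n : ℤ) + 1)
      have e : (n : ℤ) + 1 - 1 = (n : ℤ) := by ring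
      have e2 : (n : ℤ) + 1 + 1 = (n : ℤ) + 2 := by ring
      rw [e, e2] at h
      have hrec : d ((n : ℤ) + 2) = (2 : ℂ) • μ (d ((n : ℤ) + 1)) - d (n : ℤ) :=
        eq_sub_of_add_eq h.symm
      have hU : U ℂ ((n : ℤ) + 2 - 1) = 2 * X * U ℂ ((n : ℤ) + 1 - 1) - U ℂ ((n : ℤ) - 1) := by
        have h1 : (n : ℤ) + 2 - 1 = (n : ℤ) + 1 := by ring
        have h2 : (n : ℤ) + 1 - 1 = (n : ℤ) := by ring
        rw [h1, h2]; exact U_add_one ℂ n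
      rw [hrec, ih1, ih2, hU, haux2]
    | neg_add_one n ih1 ih2 =>
      have h := hd (-(n : ℤ))
      have hrec : d (-(n : ℤ) - 1) = (2 : ℂ) • μ (d (-(n : ℤ))) - d (-(n : ℤ) + 1) := by
        rw [h]; abel
      have hU : U ℂ (-(n : ℤ) - 1 - 1)
          = 2 * X * U ℂ (-(n : ℤ) - 1) - U ℂ (-(n : ℤ) + 1 - 1) := by
        have h1 : -(n : ℤ) - 1 - 1 = -(n : ℤ) - 2 := by ring
        have h2 : -(n : ℤ) + 1 - 1 = -(n : ℤ) := by ring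
        rw [h1, h2]; exact U_sub_two ℂ (-(n : ℤ))
      rw [hrec, ih1, ih2, hU, haux2]
  intro n
  have hfac := my_U_dvd ℂ (k : ℤ) n
  obtain ⟨q, hq⟩ := hfac
  have hbase : (Polynomial.aeval μ (U ℂ ((k : ℤ) - 1))) (d 1) = 0 := (key (k : ℤ)).symm.trans hdk
  have : d (n * (k : ℤ)) = 0 := by
    rw [key (n * (k : ℤ)), hq, mul_comm, map_mul, Module.End.mul_apply, hbase, map_zero]
  have := sub_eq_zero.mp this
  simpa [hdd] using this
end
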